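/- arXiv:1409.7542 — 2 statements merged into one kernel-verified Lean document; each statement's English description precedes it below -/
import Mathlib

section
/- The copycat construction preserves pullbacks in the category of esps: if P with projections Π₁ : P → A, Π₂ : P → B is a pullback of maps of esps f : A → C and g : B → C, then CC_P with projections CC_{Π₁} : CC_P → CC_A and CC_{Π₂} : CC_P → CC_B is a pullback of CC_f : CC_A → CC_C and CC_g : CC_B → CC_C. -/
set_option autoImplicit false
set_option maxHeartbeats 1000000

universe u

/-- An event structure. -/
structure ES (E : Type u) where
  le : E → E → Prop
  le_refl : ∀ e, le e e
  le_trans : ∀ {a b c}, le a b → le b c → le a c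
  le_antisymm : ∀ {a b}, le a b → le b a → a = b
  Con : Set (Set E)
  con_empty : (∅ : Set E) ∈ Con
  causes_finite : ∀ e, {e' | le e' e}.Finite
  con_finite : ∀ X ∈ Con, Set.Finite X
  con_singleton : ∀ e, ({e} : Set E) ∈ Con
  con_mono : ∀ {X Y : Set E}, Y ⊆ X → X ∈ Con → Y ∈ Con
  con_extend : ∀ {X : Set E} {e e' : E}, X ∈ Con → le e e' → e' ∈ X → X ∪ {e} ∈ Con

variable {E F G H : Type u}

/-- Configurations: finite (via `Con`), consistent, down-closed subsets. -/
def Config (A : ES E) (x : Set E) : Prop :=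
  x ∈ A.Con ∧ ∀ ⦃e : E⦄, e ∈ x → ∀ ⦃e' : E⦄, A.le e' e → e' ∈ x

/-- Covering: `x —⊂ e`. -/
def Cov (A : ES E) (x : Set E) (e : E) : Prop :=
  Config A x ∧ e ∉ x ∧ Config A (insert e x)

def ESlt (A : ES E) (e e' : E) : Prop := A.le e e' ∧ e ≠ e'

/-- Immediate causality `e ⋖ e'`. -/
def Imm (A : ES E) (e e' : E) : Prop :=
  ESlt A e e' ∧ ∀ e'', ESlt A e e'' → ESlt A e'' e' → False

/-- Total maps of event structures. -/
def IsMap (A : ES E) (B : ES F) (f : E → F) : Prop :=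
  (∀ x, Config A x → Config B (f '' x)) ∧
  (∀ x, Config A x → ∀ e ∈ x, ∀ e' ∈ x, f e = f e' → e = e')

def Rigid (A : ES E) (B : ES F) (f : E → F) : Prop :=
  IsMap A B f ∧ ∀ e e', A.le e e' → B.le (f e) (f e')

def OpenMap (A : ES E) (B : ES F) (f : E → F) : Prop :=
  Rigid A B f ∧ ∀ x y, Config A x → Config B y → f '' x ⊆ y →
    ∃ x', Config A x' ∧ x ⊆ x' ∧ f '' x' = y

def ConflictFree (A : ES E) : Prop := ∀ X : Set E, X.Finite → X ∈ A.Con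

def IsMinimal (A : ES E) (e : E) : Prop := ∀ e', A.le e' e → e' = e

/-- Event structures with polarities; `true` is Player/positive, `false` is Opponent/negative. -/
structure ESP (E : Type u) extends ES E where
  pol : E → Bool

def ESP.dual (A : ESP E) : ESP E := { toES := A.toES, pol := fun e => !A.pol e }

def IsESPMap (A : ESP E) (B : ESP F) (f : E → F) : Prop :=
  IsMap A.toES B.toES f ∧ ∀ e, B.pol (f e) = A.pol e

def NegativeESP (A : ESP E) : Prop := ∀ e, IsMinimal A.toES e → A.pol e = false

/-- Single-threaded event structures. -/
def SingleThreaded (A : ES E) : Prop :=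
  (∀ e, ∃! m, A.le m e ∧ IsMinimal A m) ∧
  (∀ x e₁ e₂, Cov A x e₁ → Cov A x e₂ → ¬ Config A (insert e₁ (insert e₂ x)) →
    ∃ m, A.le m e₁ ∧ A.le m e₂)

/- ## Relations as bijections between configurations -/

abbrev Rel2 (E : Type u) := Set (E × E)

def rdom (θ : Rel2 E) : Set E := Prod.fst '' θ
def rran (θ : Rel2 E) : Set E := Prod.snd '' θ
def relBij (θ : Rel2 E) : Prop := ∀ p ∈ θ, ∀ q ∈ θ, (p.1 = q.1 ↔ p.2 = q.2)
def relId (x : Set E) : Rel2 E := (fun e => (e, e)) '' x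
def relInv (θ : Rel2 E) : Rel2 E := Prod.swap '' θ
def relComp (θ θ' : Rel2 E) : Rel2 E := {p | ∃ b, (p.1, b) ∈ θ ∧ (b, p.2) ∈ θ'}
def relRestrict (θ : Rel2 E) (x : Set E) : Rel2 E := {p ∈ θ | p.1 ∈ x}
def relMap (f : E → F) (θ : Rel2 E) : Rel2 F := (Prod.map f f) '' θ

/-- Isomorphism families (without the polarity requirement). -/
def IsIsoFamily (A : ES E) (S : Set (Rel2 E)) : Prop :=
  (∀ θ ∈ S, relBij θ ∧ Config A (rdom θ) ∧ Config A (rran θ)) ∧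
  (∀ x, Config A x → relId x ∈ S) ∧
  (∀ θ ∈ S, relInv θ ∈ S) ∧
  (∀ θ ∈ S, ∀ θ' ∈ S, rran θ = rdom θ' → relComp θ θ' ∈ S) ∧
  (∀ θ ∈ S, ∀ x, Config A x → x ⊆ rdom θ → relRestrict θ x ∈ S) ∧
  (∀ θ ∈ S, ∀ x', Config A x' → rdom θ ⊆ x' → ∃ θ' ∈ S, θ ⊆ θ' ∧ rdom θ' = x')

/-- The members of the family are polarity-preserving. -/
def PolPres (A : ESP E) (S : Set (Rel2 E)) : Prop :=
  ∀ θ ∈ S, ∀ p ∈ θ, A.pol p.1 = A.pol p.2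

def FamPres (SA : Set (Rel2 E)) (SB : Set (Rel2 F)) (f : E → F) : Prop :=
  ∀ θ ∈ SA, relMap f θ ∈ SB

/-- `f ∼ g` : the two maps are symmetric. -/
def SymMaps (A : ES E) (SB : Set (Rel2 F)) (f g : E → F) : Prop :=
  ∀ x, Config A x → {p : F × F | ∃ a ∈ x, p = (f a, g a)} ∈ SB

/-- `θ ⊆⁺ θ'`. -/
def PosRelExt (A : ESP E) (θ θ' : Rel2 E) : Prop :=
  θ ⊆ θ' ∧ ∀ p ∈ θ', p ∉ θ → A.pol p.1 = true ∧ A.pol p.2 = true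

/-- `θ ⊆⁻ θ'`. -/
def NegRelExt (A : ESP E) (θ θ' : Rel2 E) : Prop :=
  θ ⊆ θ' ∧ ∀ p ∈ θ', p ∉ θ → A.pol p.1 = false ∧ A.pol p.2 = false

/-- `x ⊆⁺ x'` for configurations. -/
def PosSetExt (A : ESP E) (x x' : Set E) : Prop :=
  x ⊆ x' ∧ ∀ e ∈ x', e ∉ x → A.pol e = true

def Courteous (S : ESP E) (A : ESP F) (σ : E → F) : Prop :=
  ∀ s₁ s₂, Imm S.toES s₁ s₂ → (S.pol s₁ = true ∨ S.pol s₂ = false) →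
    Imm A.toES (σ s₁) (σ s₂)

def Receptive (S : ESP E) (A : ESP F) (σ : E → F) : Prop :=
  ∀ x a, Config S.toES x → Cov A.toES (σ '' x) a → A.pol a = false →
    ∃! s, Cov S.toES x s ∧ σ s = a

def StrongReceptive (S : ESP E) (SS : Set (Rel2 E)) (A : ESP F) (SA : Set (Rel2 F))
    (σ : E → F) : Prop :=
  ∀ θ ∈ SS, ∀ a₁ a₂ : F, A.pol a₁ = false → A.pol a₂ = false →
    (a₁, a₂) ∉ relMap σ θ → insert (a₁, a₂) (relMap σ θ) ∈ SA →
    ∃! st : E × E, insert st θ ∈ SS ∧ σ st.1 = a₁ ∧ σ st.2 = a₂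

/-- Thin: two positive compatible extensions of a member of the family are compatible. -/
def ThinFam (A : ESP E) (S : Set (Rel2 E)) : Prop :=
  ∀ θ ∈ S, ∀ θ₁ ∈ S, ∀ θ₂ ∈ S, PosRelExt A θ θ₁ → PosRelExt A θ θ₂ →
    Config A.toES (rdom θ₁ ∪ rdom θ₂) → θ₁ ∪ θ₂ ∈ S

/-- Race-preserving essp (family-level). -/
def RacePresFam (A : ESP E) (S : Set (Rel2 E)) : Prop :=
  ∀ θ ∈ S, ∀ θ₁ ∈ S, ∀ θ₂ ∈ S, PosRelExt A θ θ₁ → NegRelExt A θ θ₂ →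
    Config A.toES (rdom θ₁ ∪ rdom θ₂) → θ₁ ∪ θ₂ ∈ S

/-- Existence of receptive thin sub-symmetries of `A` and of `A^⊥`. -/
def HasThinReceptiveSubs (A : ESP E) (SA : Set (Rel2 E)) : Prop :=
  (∃ Sp ⊆ SA, IsIsoFamily A.toES Sp ∧
    (∀ θ ∈ Sp, ∀ θ' ∈ SA, NegRelExt A θ θ' → θ' ∈ Sp) ∧ ThinFam A Sp) ∧
  (∃ Sm ⊆ SA, IsIsoFamily A.toES Sm ∧
    (∀ θ ∈ Sm, ∀ θ' ∈ SA, NegRelExt A.dual θ θ' → θ' ∈ Sm) ∧ ThinFam A.dual Sm)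

/-- Thin concurrent games (family-level presentation). -/
def IsTCG (A : ESP E) (SA : Set (Rel2 E)) : Prop :=
  IsIsoFamily A.toES SA ∧ PolPres A SA ∧ RacePresFam A SA ∧ HasThinReceptiveSubs A SA

/-- ∼-strategies. -/
def IsSimStrategy (S : ESP E) (SS : Set (Rel2 E)) (A : ESP F) (SA : Set (Rel2 F))
    (σ : E → F) : Prop :=
  IsESPMap S A σ ∧ FamPres SS SA σ ∧ IsIsoFamily S.toES SS ∧ PolPres S SS ∧
  Courteous S A σ ∧ StrongReceptive S SS A SA σ ∧ ThinFam S SS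

/-- Weak equivalence of ∼-strategies on a common essp. -/
def WeakEquiv {S T GE : Type u} (PS : ESP S) (SS : Set (Rel2 S)) (PT : ESP T)
    (ST : Set (Rel2 T)) (SG : Set (Rel2 GE)) (σ : S → GE) (τ : T → GE) : Prop :=
  ∃ f : S → T, ∃ g : T → S,
    IsESPMap PS PT f ∧ FamPres SS ST f ∧ IsESPMap PT PS g ∧ FamPres ST SS g ∧
    SymMaps PT.toES ST (f ∘ g) id ∧ SymMaps PS.toES SS (g ∘ f) id ∧
    SymMaps PS.toES SG (τ ∘ f) σ ∧ SymMaps PT.toES SG (σ ∘ g) τ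

/- ## Stable families, primes, products, pullbacks -/

def FamLe (Fam : Set (Set E)) (x : Set E) (e e' : E) : Prop :=
  ∀ y ∈ Fam, y ⊆ x → e' ∈ y → e ∈ y

def FamPrime (Fam : Set (Set E)) (x : Set E) (e : E) : Set E :=
  {e' ∈ x | FamLe Fam x e' e}

def IsPrime (Fam : Set (Set E)) (p : Set E) : Prop :=
  ∃ x ∈ Fam, ∃ e ∈ x, p = FamPrime Fam x e

/-- `e` is the generating (top) event of the prime `p`. -/
def PrRep (Fam : Set (Set E)) (p : Set E) (e : E) : Prop :=
  ∃ x ∈ Fam, e ∈ x ∧ p = FamPrime Fam x e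

def PrimeLt (p q : Set E) : Prop := p ⊆ q ∧ p ≠ q

/-- Immediate causality in `Pr(Fam)`. -/
def PrImm (Fam : Set (Set E)) (p q : Set E) : Prop :=
  IsPrime Fam p ∧ IsPrime Fam q ∧ PrimeLt p q ∧
  ∀ r, IsPrime Fam r → PrimeLt p r → PrimeLt r q → False

/-- Configurations of `Pr(Fam)`. -/
def PrConfig (Fam : Set (Set E)) (z : Set (Set E)) : Prop :=
  z.Finite ∧ (∀ p ∈ z, IsPrime Fam p) ∧
  (∀ p ∈ z, ∀ q, IsPrime Fam q → q ⊆ p → q ∈ z) ∧ ⋃₀ z ∈ Fam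

/-- The product stable family `C(A) × C(B)`. -/
def ProdFam (A : ES E) (B : ES F) : Set (Set (E × F)) :=
  {x | x.Finite ∧ Config A (Prod.fst '' x) ∧ Config B (Prod.snd '' x) ∧
    (∀ p ∈ x, ∀ q ∈ x, p.1 = q.1 → p = q) ∧
    (∀ p ∈ x, ∀ q ∈ x, p.2 = q.2 → p = q) ∧
    (∀ p ∈ x, ∀ q ∈ x, p ≠ q → ∃ y ⊆ x,
      Config A (Prod.fst '' y) ∧ Config B (Prod.snd '' y) ∧ (p ∈ y ↔ q ∉ y))}

/-- The stable family `(C(A) × C(B)) ↾ R` defining the pullback `A ⊛ B` of `f` and `g`. -/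
def PbFam (A : ES E) (B : ES F) (f : E → G) (g : F → G) : Set (Set (E × F)) :=
  {x | x ∈ ProdFam A B ∧ ∀ p ∈ x, f p.1 = g p.2}

/- ## Secured bijections -/

def SecStep (A : ES E) (B : ES F) (θ : Set (E × F)) (p q : E × F) : Prop :=
  p ∈ θ ∧ q ∈ θ ∧ (A.le p.1 q.1 ∨ B.le p.2 q.2)

def SecuredBij (A : ES E) (B : ES F) (f : E → G) (g : F → G) (θ : Set (E × F)) : Prop :=
  Config A (Prod.fst '' θ) ∧ Config B (Prod.snd '' θ) ∧
  (∀ p ∈ θ, ∀ q ∈ θ, (p.1 = q.1 ↔ p.2 = q.2)) ∧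
  (∀ p ∈ θ, f p.1 = g p.2) ∧
  (∀ p q, Relation.TransGen (SecStep A B θ) p q → Relation.TransGen (SecStep A B θ) q p → p = q)

/- ## Parallel composition -/

def IsParES (A : ES E) (B : ES F) (P : ES (E ⊕ F)) : Prop :=
  (∀ e e', P.le e e' ↔ Sum.LiftRel A.le B.le e e') ∧
  (∀ X, X ∈ P.Con ↔ X.Finite ∧ (Sum.inl ⁻¹' X) ∈ A.Con ∧ (Sum.inr ⁻¹' X) ∈ B.Con)

def IsParESP (A : ESP E) (B : ESP F) (P : ESP (E ⊕ F)) : Prop :=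
  IsParES A.toES B.toES P.toES ∧
  (∀ a, P.pol (Sum.inl a) = A.pol a) ∧ (∀ b, P.pol (Sum.inr b) = B.pol b)

def parFam (SA : Set (Rel2 E)) (SB : Set (Rel2 F)) : Set (Rel2 (E ⊕ F)) :=
  {θ | ∃ θA ∈ SA, ∃ θB ∈ SB, θ = relMap Sum.inl θA ∪ relMap Sum.inr θB}

/- ## Copycat -/

def ccPol (A : ESP E) (p : Bool × E) : Bool := cond p.1 (A.pol p.2) (!A.pol p.2)

def ccBase (A : ESP E) (p q : Bool × E) : Prop :=
  (p.1 = q.1 ∧ A.le p.2 q.2) ∨ (p.2 = q.2 ∧ p.1 ≠ q.1 ∧ ccPol A q = true)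

def ccLe (A : ESP E) : Bool × E → Bool × E → Prop := Relation.ReflTransGen (ccBase A)

def ccDcl (A : ESP E) (X : Set (Bool × E)) : Set (Bool × E) := {p | ∃ q ∈ X, ccLe A p q}

def IsCopycatOf (A : ESP E) (CA : ESP (Bool × E)) : Prop :=
  (∀ p q, CA.le p q ↔ ccLe A p q) ∧
  (∀ X, X ∈ CA.Con ↔ X.Finite ∧
    {a | (false, a) ∈ ccDcl A X} ∈ A.Con ∧ {a | (true, a) ∈ ccDcl A X} ∈ A.Con) ∧
  (∀ p, CA.pol p = ccPol A p)

def ccMap (f : E → F) : Bool × E → Bool × F := Prod.map id f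

def ccToGame : Bool × E → E ⊕ E := fun p => cond p.1 (Sum.inr p.2) (Sum.inl p.2)

/- ## Symmetry presented as spans -/

def famOf (Et : ES F) (l r : F → E) : Set (Rel2 E) :=
  {θ | ∃ x, Config Et x ∧ θ = {p | ∃ aa ∈ x, p = (l aa, r aa)}}

def IsSymSpanES (A : ES E) (Et : ES F) (l r : F → E) : Prop :=
  OpenMap Et A l ∧ OpenMap Et A r ∧
  (∀ aa aa', l aa = l aa' → r aa = r aa' → aa = aa') ∧
  (∀ x, Config A x → relId x ∈ famOf Et l r) ∧
  (∀ θ ∈ famOf Et l r, relInv θ ∈ famOf Et l r) ∧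
  (∀ θ ∈ famOf Et l r, ∀ θ' ∈ famOf Et l r, rran θ = rdom θ' → relComp θ θ' ∈ famOf Et l r)

def IsSymSpanESP (A : ESP E) (Et : ESP F) (l r : F → E) : Prop :=
  IsSymSpanES A.toES Et.toES l r ∧ IsESPMap Et A l ∧ IsESPMap Et A r

def MapPresRaces (S : ESP E) (A : ESP F) (f : E → F) : Prop :=
  ∀ x e₁ e₂, Cov S.toES x e₁ → Cov S.toES x e₂ →
    S.pol e₁ = false → S.pol e₂ = true →
    ¬ Config S.toES (insert e₁ (insert e₂ x)) →
    ¬ Config A.toES (insert (f e₁) (insert (f e₂) (f '' x)))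

def ReflPosCompat (St : ESP F) (S : ES E) (l : F → E) : Prop :=
  ∀ x x₁ x₂, Config St.toES x → Config St.toES x₁ → Config St.toES x₂ →
    x ⊆ x₁ → x ⊆ x₂ →
    (∀ e ∈ x₁, e ∉ x → St.pol e = true) → (∀ e ∈ x₂, e ∉ x → St.pol e = true) →
    Config S (l '' x₁ ∪ l '' x₂) → Config St.toES (x₁ ∪ x₂)

/- ## Higher symmetry -/

/-- The higher isomorphism family of an essp given by its family `SA`, at the level of
pairs of events: members correspond to commuting squares `φ' ∘ θ = θ' ∘ φ`. -/
def HigherFam (SA : Set (Rel2 E)) : Set (Rel2 (E × E)) :=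
  {Φ | ∃ θ ∈ SA, ∃ θ' ∈ SA, ∃ φ ∈ SA, ∃ φ' ∈ SA,
    rdom φ = rdom θ ∧ rdom φ' = rran θ ∧ rran φ = rdom θ' ∧ rran φ' = rran θ' ∧
    (∀ a b c d, (a, b) ∈ θ → (a, c) ∈ φ → (b, d) ∈ φ' → (c, d) ∈ θ') ∧
    Φ = {P | ∃ a b c d, (a, b) ∈ θ ∧ (a, c) ∈ φ ∧ (b, d) ∈ φ' ∧ P = ((a, b), (c, d))}}

/-- The higher isomorphism family, transported to the events of `Ã = Pr(SA)`,
i.e. primes of the stable family `SA`. -/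
def LiftFam (SA : Set (Rel2 E)) : Set (Rel2 {p : Rel2 E // IsPrime SA p}) :=
  {Θ | ∃ θ ∈ SA, ∃ θ' ∈ SA, ∃ φ ∈ SA, ∃ φ' ∈ SA,
    rdom φ = rdom θ ∧ rdom φ' = rran θ ∧ rran φ = rdom θ' ∧ rran φ' = rran θ' ∧
    (∀ a b c d, (a, b) ∈ θ → (a, c) ∈ φ → (b, d) ∈ φ' → (c, d) ∈ θ') ∧
    Θ = {P | ∃ a b c d, (a, b) ∈ θ ∧ (a, c) ∈ φ ∧ (b, d) ∈ φ' ∧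
          P.1.1 = FamPrime SA θ (a, b) ∧ P.2.1 = FamPrime SA θ' (c, d)}}

/- ## Pullbacks as universal properties -/

def IsPullbackES {A B C P : Type u} (EP : ES P) (EA : ES A) (EB : ES B) (EC : ES C)
    (Pi1 : P → A) (Pi2 : P → B) (f : A → C) (g : B → C) : Prop :=
  IsMap EP EA Pi1 ∧ IsMap EP EB Pi2 ∧ f ∘ Pi1 = g ∘ Pi2 ∧
  ∀ {X : Type u} (EX : ES X) (h₁ : X → A) (h₂ : X → B),
    IsMap EX EA h₁ → IsMap EX EB h₂ → f ∘ h₁ = g ∘ h₂ →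
    ∃! h : X → P, IsMap EX EP h ∧ Pi1 ∘ h = h₁ ∧ Pi2 ∘ h = h₂

def IsPullbackESP {A B C P : Type u} (EP : ESP P) (EA : ESP A) (EB : ESP B) (EC : ESP C)
    (Pi1 : P → A) (Pi2 : P → B) (f : A → C) (g : B → C) : Prop :=
  IsESPMap EP EA Pi1 ∧ IsESPMap EP EB Pi2 ∧ f ∘ Pi1 = g ∘ Pi2 ∧
  ∀ {X : Type u} (EX : ESP X) (h₁ : X → A) (h₂ : X → B),
    IsESPMap EX EA h₁ → IsESPMap EX EB h₂ → f ∘ h₁ = g ∘ h₂ →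
    ∃! h : X → P, IsESPMap EX EP h ∧ Pi1 ∘ h = h₁ ∧ Pi2 ∘ h = h₂

/- ## Composition of strategies -/

def compLeft {S GA GB GC : Type u} (σ : S → GA ⊕ GB) : S ⊕ GC → (GA ⊕ GB) ⊕ GC :=
  Sum.map σ id

def compRight {T GA GB GC : Type u} (τ : T → GB ⊕ GC) : GA ⊕ T → (GA ⊕ GB) ⊕ GC :=
  Sum.elim (fun a => Sum.inl (Sum.inl a))
    (fun t => Sum.elim (fun b => Sum.inl (Sum.inr b)) (fun c => Sum.inr c) (τ t))

def outAC {A B C : Type u} : (A ⊕ B) ⊕ C → Option (A ⊕ C) :=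
  Sum.elim (Sum.elim (fun a => some (Sum.inl a)) (fun _ => none)) (fun c => some (Sum.inr c))

/-- Visible events of the interaction. -/
def VisE {S T GA GB GC : Type u} (σ : S → GA ⊕ GB) (e : (S ⊕ GC) × (GA ⊕ T)) : Prop :=
  (outAC (compLeft σ e.1)).isSome = true

/-- Visible primes of the interaction. -/
def VisP {S T GA GB GC : Type u} (Fam : Set (Set ((S ⊕ GC) × (GA ⊕ T))))
    (σ : S → GA ⊕ GB) (p : Set ((S ⊕ GC) × (GA ⊕ T))) : Prop :=
  ∃ e, PrRep Fam p e ∧ VisE σ e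

/-- The underlying relation of a bijection between configurations of `Pr(Fam)`. -/
def relUnder {P : Type u} (Fam : Set (Set P)) (Θ : Rel2 (Set P)) :
    Rel2 P :=
  {ee | ∃ pq ∈ Θ, PrRep Fam pq.1 ee.1 ∧ PrRep Fam pq.2 ee.2}

/-- The isomorphism family of the pullback `Pr(Fam)` of two ∼-strategies,
characterised via the projections. -/
def PbSymFam {A B : Type u} (Fam : Set (Set (A × B))) (S1 : Set (Rel2 A))
    (S2 : Set (Rel2 B)) : Set (Rel2 (Set (A × B))) :=
  {Θ | relBij Θ ∧ PrConfig Fam (rdom Θ) ∧ PrConfig Fam (rran Θ) ∧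
    relMap Prod.fst (relUnder Fam Θ) ∈ S1 ∧ relMap Prod.snd (relUnder Fam Θ) ∈ S2}

/-- A witness for the concrete composition `τ ⊙ σ` of strategies. -/
structure CompWitness {S T GA GB GC : Type u} (PS : ESP S) (PT : ESP T)
    (PA : ESP GA) (PC : ESP GC) (σ : S → GA ⊕ GB) (τ : T → GB ⊕ GC) where
  L : ES (S ⊕ GC)
  R : ES (GA ⊕ T)
  hL : IsParES PS.toES PC.toES L
  hR : IsParES PA.toES PT.toES R
  Comp : ESP {p : Set ((S ⊕ GC) × (GA ⊕ T)) //
    VisP (PbFam L R (compLeft σ) (compRight τ)) σ p}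
  hle : ∀ p q, Comp.le p q ↔ p.1 ⊆ q.1
  hcon : ∀ X, X ∈ Comp.Con ↔
    X.Finite ∧ ⋃₀ (Subtype.val '' X) ∈ PbFam L R (compLeft σ) (compRight τ)
  co : {p : Set ((S ⊕ GC) × (GA ⊕ T)) //
    VisP (PbFam L R (compLeft σ) (compRight τ)) σ p} → GA ⊕ GC
  hco : ∀ p e, PrRep (PbFam L R (compLeft σ) (compRight τ)) p.1 e →
    outAC (compLeft σ e.1) = some (co p)
  hpol : ∀ p, Comp.pol p = Sum.elim (fun a => !PA.pol a) (fun c => PC.pol c) (co p)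

/-- The isomorphism family of the composition: restriction to visible primes of the
family of the interaction. -/
def cfam {S T GA GB GC : Type u} {PS : ESP S} {PT : ESP T} {PA : ESP GA} {PC : ESP GC}
    {σ : S → GA ⊕ GB} {τ : T → GB ⊕ GC}
    (SS : Set (Rel2 S)) (ST : Set (Rel2 T)) (SA : Set (Rel2 GA)) (SC : Set (Rel2 GC))
    (w : CompWitness PS PT PA PC σ τ) :
    Set (Rel2 {p : Set ((S ⊕ GC) × (GA ⊕ T)) //
      VisP (PbFam w.L w.R (compLeft σ) (compRight τ)) σ p}) :=
  {Θ | ∃ Φ ∈ PbSymFam (PbFam w.L w.R (compLeft σ) (compRight τ))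
      (parFam SS SC) (parFam SA ST),
    relMap Subtype.val Θ =
      {pq ∈ Φ | VisP (PbFam w.L w.R (compLeft σ) (compRight τ)) σ pq.1 ∧
                VisP (PbFam w.L w.R (compLeft σ) (compRight τ)) σ pq.2}}
namespace S8
open Relation

variable {E F G : Type u}

/-- The down-closure `[e]` is a configuration. -/
lemma config_causes (M : ES E) (e : E) : Config M {e' | M.le e' e} := by
  have key : ∀ T : Set E, T.Finite → (∀ t ∈ T, M.le t e) → insert e T ∈ M.Con := by
    intro T hT
    refine Set.Finite.induction_on (motive := fun T _ => (∀ t ∈ T, M.le t e) → insert e T ∈ M.Con)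
      T hT (fun _ => by simpa using M.con_singleton e) ?_
    intro a s ha hfin ih hsub
    have h1 : insert e s ∈ M.Con := ih (fun t ht => hsub t (Set.mem_insert_of_mem _ ht))
    have h2 := M.con_extend h1 (hsub a (Set.mem_insert _ _)) (Set.mem_insert e s)
    have h3 : insert e (insert a s) = insert e s ∪ {a} := by
      rw [Set.union_singleton, Set.insert_comm]
    rw [h3]; exact h2
  constructor
  · have h4 := key {e' | M.le e' e} (M.causes_finite e) (fun t ht => ht)
    have h5 : insert e {e' | M.le e' e} = {e' | M.le e' e} :=
      Set.insert_eq_self.2 (M.le_refl e)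
    rwa [h5] at h4
  · intro a ha b hb; exact M.le_trans hb ha

lemma isMap_comp {MA : ES E} {MB : ES F} {MC : ES G} {f : E → F} {g : F → G}
    (hf : IsMap MA MB f) (hg : IsMap MB MC g) : IsMap MA MC (g ∘ f) := by
  constructor
  · intro x hx; rw [Set.image_comp]; exact hg.1 _ (hf.1 x hx)
  · intro x hx e he e' he' h
    exact hf.2 x hx e he e' he'
      (hg.2 _ (hf.1 x hx) _ (Set.mem_image_of_mem f he) _ (Set.mem_image_of_mem f he') h)

lemma isESPMap_comp {MA : ESP E} {MB : ESP F} {MC : ESP G} {f : E → F} {g : F → G}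
    (hf : IsESPMap MA MB f) (hg : IsESPMap MB MC g) : IsESPMap MA MC (g ∘ f) :=
  ⟨isMap_comp hf.1 hg.1, fun e => by
    simp only [Function.comp_apply]; rw [hg.2, hf.2]⟩

section CC
variable {A : Type u} (EA : ESP A) (CA : ESP (Bool × A))

lemma ccPol_not (b : Bool) (a : A) : ccPol EA (!b, a) = !ccPol EA (b, a) := by
  cases b <;> simp [ccPol]

lemma ccLe_mem_closed {S : Set (Bool × A)}
    (h : ∀ q r, ccBase EA q r → r ∈ S → q ∈ S) :
    ∀ q r, ccLe EA q r → r ∈ S → q ∈ S := by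
  intro q r hqr
  induction hqr using Relation.ReflTransGen.head_induction_on with
  | refl => exact id
  | head hstep _ ih => intro hr; exact h _ _ hstep (ih hr)

lemma cc_config_dc (hCA : IsCopycatOf EA CA) {y : Set (Bool × A)} (hy : Config CA.toES y) :
    ∀ q r, ccLe EA q r → r ∈ y → q ∈ y := by
  intro q r h hr
  exact hy.2 hr ((hCA.1 q r).2 h)

lemma cc_dcl_config (hCA : IsCopycatOf EA CA) {y : Set (Bool × A)} (hy : Config CA.toES y) : ccDcl EA y = y := by
  ext p
  constructor
  · rintro ⟨q, hq, hle⟩; exact cc_config_dc EA CA hCA hy p q hle hq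
  · intro hp; exact ⟨p, hp, Relation.ReflTransGen.refl⟩

lemma cc_config_proj (hCA : IsCopycatOf EA CA) {y : Set (Bool × A)} (hy : Config CA.toES y) (i : Bool) :
    Config EA.toES {a | (i, a) ∈ y} := by
  constructor
  · have hcon := (hCA.2.1 y).1 hy.1
    rw [cc_dcl_config EA CA hCA hy] at hcon
    cases i
    · exact hcon.2.1
    · exact hcon.2.2
  · intro a ha a' hle
    exact cc_config_dc EA CA hCA hy (i, a') (i, a)
      (Relation.ReflTransGen.single (Or.inl ⟨rfl, hle⟩)) ha

lemma cc_config_comp (hCA : IsCopycatOf EA CA) {y : Set (Bool × A)} (hy : Config CA.toES y) {i : Bool} {a : A}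
    (hmem : (i, a) ∈ y) (hpos : ccPol EA (i, a) = true) : (!i, a) ∈ y :=
  cc_config_dc EA CA hCA hy (!i, a) (i, a)
    (Relation.ReflTransGen.single
      (show ccBase EA (!i, a) (i, a) from Or.inr ⟨rfl, Bool.not_ne_self i, hpos⟩)) hmem

lemma cc_config_mk (hCA : IsCopycatOf EA CA) {y : Set (Bool × A)} (hfin : y.Finite)
    (hdc : ∀ q r, ccBase EA q r → r ∈ y → q ∈ y)
    (hfc : {a | (false, a) ∈ y} ∈ EA.Con) (htc : {a | (true, a) ∈ y} ∈ EA.Con) :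
    Config CA.toES y := by
  have hdc' := ccLe_mem_closed EA hdc
  have hdcl : ccDcl EA y = y := by
    ext p
    exact ⟨fun ⟨q, hq, hle⟩ => hdc' _ _ hle hq,
      fun hp => ⟨p, hp, Relation.ReflTransGen.refl⟩⟩
  constructor
  · exact (hCA.2.1 y).2 ⟨hfin, by rw [hdcl]; exact hfc, by rw [hdcl]; exact htc⟩
  · intro r hr q hle; exact hdc' q r ((hCA.1 q r).1 hle) hr

end CC

/-- The copycat functor on maps. -/
lemma ccMap_map {P A : Type u} (EP : ESP P) (EA : ESP A)
    (CP : ESP (Bool × P)) (CA : ESP (Bool × A))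
    (hCP : IsCopycatOf EP CP) (hCA : IsCopycatOf EA CA)
    (m : P → A) (hm : IsESPMap EP EA m) : IsESPMap CP CA (ccMap m) := by
  have hpol : ∀ p : Bool × P, ccPol EA (ccMap m p) = ccPol EP p := by
    rintro ⟨b, p⟩; cases b <;> simp [ccPol, ccMap, hm.2]
  refine ⟨⟨?_, ?_⟩, ?_⟩
  · intro y hy
    have hmem : ∀ q : Bool × A, q ∈ ccMap m '' y ↔ ∃ p, (q.1, p) ∈ y ∧ m p = q.2 := by
      rintro ⟨j, a⟩
      constructor
      · rintro ⟨⟨j', p⟩, hp, heq⟩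
        cases heq; exact ⟨p, hp, rfl⟩
      · rintro ⟨p, hp, heq⟩
        exact ⟨(j, p), hp, by simp [ccMap, heq]⟩
    apply cc_config_mk EA CA hCA
    · exact (hy.1 |> CP.con_finite y).image _
    · rintro ⟨j1, a1⟩ ⟨j2, a2⟩ hbase hr
      obtain ⟨p2, hp2, hmp2⟩ := (hmem _).1 hr
      rcases hbase with ⟨hj, hle⟩ | ⟨ha, hj, hp⟩
      · dsimp at hj hle; subst hj; subst hmp2
        have hproj := cc_config_proj EP CP hCP hy j1
        have himg := hm.1.1 _ hproj
        have hmem2 : a1 ∈ m '' {p | (j1, p) ∈ y} := himg.2 (Set.mem_image_of_mem m hp2) hle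
        obtain ⟨p1, hp1, hmp1⟩ := hmem2
        exact (hmem _).2 ⟨p1, hp1, hmp1⟩
      · dsimp at ha hj hp; subst ha; subst hmp2
        have hj1 : j1 = !j2 := by cases j1 <;> cases j2 <;> simp_all
        subst hj1
        have hpos : ccPol EP (j2, p2) = true := by rw [← hpol (j2, p2)]; exact hp
        have := cc_config_comp EP CP hCP hy hp2 hpos
        exact (hmem _).2 ⟨p2, this, rfl⟩
    · have : {a | (false, a) ∈ ccMap m '' y} = m '' {p | (false, p) ∈ y} := by
        ext a
        simp only [Set.mem_setOf_eq, Set.mem_image]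
        constructor
        · rintro ⟨⟨j, p⟩, hp, heq⟩
          have h1 : j = false := congrArg Prod.fst heq
          subst h1
          exact ⟨p, hp, congrArg Prod.snd heq⟩
        · rintro ⟨p, hp, hmp⟩
          exact ⟨(false, p), hp, by simp [ccMap, hmp]⟩
      rw [this]
      exact (hm.1.1 _ (cc_config_proj EP CP hCP hy false)).1
    · have : {a | (true, a) ∈ ccMap m '' y} = m '' {p | (true, p) ∈ y} := by
        ext a
        simp only [Set.mem_setOf_eq, Set.mem_image]
        constructor
        · rintro ⟨⟨j, p⟩, hp, heq⟩
          have h1 : j = true := congrArg Prod.fst heq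
          subst h1
          exact ⟨p, hp, congrArg Prod.snd heq⟩
        · rintro ⟨p, hp, hmp⟩
          exact ⟨(true, p), hp, by simp [ccMap, hmp]⟩
      rw [this]
      exact (hm.1.1 _ (cc_config_proj EP CP hCP hy true)).1
  · rintro y hy ⟨j1, p1⟩ h1 ⟨j2, p2⟩ h2 heq
    have hj : j1 = j2 := congrArg Prod.fst heq
    subst hj
    have hm2 : m p1 = m p2 := congrArg Prod.snd heq
    have hproj := cc_config_proj EP CP hCP hy j1
    have := hm.1.2 _ hproj p1 h1 p2 h2 hm2
    rw [this]
  · rintro ⟨b, p⟩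
    rw [hCA.2.2, hCP.2.2, hpol]


section Univ

variable {A B C D X : Type u}

/-- Down-closure in `X` of the image of a set under `v`. -/
def Dv (EX : ESP X) {Y : Type u} (v : Y → X) (S : Set Y) : Set X :=
  {x' | ∃ s ∈ S, EX.le x' (v s)}

/-- The carrier of the side-`i` restriction. -/
def XiC (h₁ : X → Bool × A) (i : Bool) : Type u := {x : X // (h₁ x).1 = i}

/-- The side-`i` restriction esp. -/
def XiESP (EX : ESP X) (h₁ : X → Bool × A) (i : Bool) : ESP (XiC h₁ i) where
  le a b := EX.le a.val b.val
  le_refl a := EX.le_refl _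
  le_trans h h' := EX.le_trans h h'
  le_antisymm h h' := Subtype.ext (EX.le_antisymm h h')
  Con := {Y | Dv EX Subtype.val Y ∈ EX.Con}
  con_empty := by
    have h0 : Dv EX (Subtype.val : XiC h₁ i → X) ∅ = ∅ := by
      ext x'; simp [Dv]
    show Dv EX Subtype.val ∅ ∈ EX.Con
    rw [h0]; exact EX.con_empty
  causes_finite e := by
    have h1 : Set.Finite ((Subtype.val : XiC h₁ i → X) ⁻¹' {e' | EX.le e' e.val}) :=
      (EX.causes_finite e.val).preimage (Set.injOn_of_injective Subtype.val_injective)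
    exact h1
  con_finite Y hY := by
    have h1 : Set.Finite (Dv EX Subtype.val Y) := EX.con_finite _ hY
    have h2 : Y ⊆ Subtype.val ⁻¹' (Dv EX Subtype.val Y) :=
      fun s hs => ⟨s, hs, EX.le_refl _⟩
    exact ((h1.preimage (Set.injOn_of_injective Subtype.val_injective)).subset h2)
  con_singleton e := by
    show Dv EX Subtype.val {e} ∈ EX.Con
    have h0 : Dv EX Subtype.val {e} = {x' | EX.le x' e.val} := by
      ext x'; exact ⟨fun ⟨s, hs, hl⟩ => by rw [Set.mem_singleton_iff.1 hs] at hl; exact hl,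
        fun hl => ⟨e, rfl, hl⟩⟩
    rw [h0]; exact (config_causes EX.toES e.val).1
  con_mono {Y Z} h hY := by
    refine EX.con_mono (fun x' hx' => ?_) hY
    obtain ⟨s, hs, hle⟩ := hx'
    exact ⟨s, h hs, hle⟩
  con_extend {Y e e'} hY hle he' := by
    show Dv EX Subtype.val (Y ∪ {e}) ∈ EX.Con
    have h0 : Dv EX Subtype.val (Y ∪ {e}) = Dv EX Subtype.val Y := by
      ext x'
      constructor
      · rintro ⟨s, hs | hs, hl⟩
        · exact ⟨s, hs, hl⟩
        · rcases hs with rfl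
          exact ⟨e', he', EX.le_trans hl hle⟩
      · rintro ⟨s, hs, hl⟩; exact ⟨s, Or.inl hs, hl⟩
    rw [h0]; exact hY
  pol x := cond i (EX.pol x.val) (!EX.pol x.val)

/-- Generic: the second component of a copycat-valued map is a map on each side. -/
lemma side_map (EX : ESP X) (h₁ : X → Bool × A) (i : Bool)
    (ED : ESP D) (CD : ESP (Bool × D)) (hCD : IsCopycatOf ED CD)
    (k : X → Bool × D) (hk : IsESPMap EX CD k) (hk1 : ∀ x, (k x).1 = (h₁ x).1) :
    IsESPMap (XiESP EX h₁ i) ED (fun s => (k s.val).2) := by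
  have hwc : ∀ z : Set (XiC h₁ i), Config (XiESP EX h₁ i).toES z →
      Config EX.toES (Dv EX Subtype.val z) := by
    intro z hz
    refine ⟨hz.1, ?_⟩
    rintro x' ⟨s, hs, hls⟩ x'' hl
    exact ⟨s, hs, EX.le_trans hl hls⟩
  have hval : ∀ z (s : XiC h₁ i), s ∈ z → s.val ∈ Dv EX Subtype.val z :=
    fun z s hs => ⟨s, hs, EX.le_refl _⟩
  have hkfst : ∀ s : XiC h₁ i, k s.val = (i, (k s.val).2) := by
    intro s
    have := hk1 s.val
    rw [s.2] at this
    exact Prod.ext this rfl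
  refine ⟨⟨?_, ?_⟩, ?_⟩
  · intro z hz
    have hky : Config CD.toES (k '' Dv EX Subtype.val z) := hk.1.1 _ (hwc z hz)
    have himg : (fun s : XiC h₁ i => (k s.val).2) '' z
        = {d | (i, d) ∈ k '' Dv EX Subtype.val z} := by
      ext d
      constructor
      · rintro ⟨s, hs, rfl⟩
        exact ⟨s.val, hval z s hs, (hkfst s)⟩
      · rintro ⟨x'', hx'', hkx⟩
        obtain ⟨s0, hs0, hle0⟩ := hx''
        have hfst : (h₁ x'').1 = i := by rw [← hk1, hkx]
        have hmem : (⟨x'', hfst⟩ : XiC h₁ i) ∈ z := hz.2 hs0 hle0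
        exact ⟨⟨x'', hfst⟩, hmem, by show (k x'').2 = d; rw [hkx]⟩
    rw [himg]
    exact cc_config_proj ED CD hCD hky i
  · intro z hz s hs t ht heq
    have h1 : k s.val = k t.val := by
      rw [hkfst s, hkfst t]
      exact Prod.ext rfl heq
    exact Subtype.ext (hk.1.2 _ (hwc z hz) s.val (hval z s hs) t.val (hval z t ht) h1)
  · intro s
    have h5 : ccPol ED (k s.val) = EX.pol s.val := by
      rw [← hCD.2.2]; exact hk.2 s.val
    rw [hkfst s] at h5
    show ED.pol ((k s.val).2) = cond i (EX.pol s.val) (!EX.pol s.val)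
    cases i
    · simp only [ccPol, cond_false] at h5 ⊢
      rw [← h5, Bool.not_not]
    · simpa [ccPol] using h5

/-- Two negative events of a common configuration with equal copycat images
on possibly different sides are equal. -/
lemma collide (EX : ESP X) (ED : ESP D) (CD : ESP (Bool × D)) (hCD : IsCopycatOf ED CD)
    (k : X → Bool × D) (hk : IsESPMap EX CD k) {z : Set X} (hz : Config EX.toES z)
    {x x' : X} (hx : x ∈ z) (hx' : x' ∈ z) (hp : EX.pol x = false)
    (hp' : EX.pol x' = false) (he : (k x).2 = (k x').2) : x = x' := by
  by_cases hf : (k x).1 = (k x').1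
  · exact hk.1.2 z hz x hx x' hx' (Prod.ext hf he)
  · exfalso
    have e1 : ccPol ED (k x) = false := by rw [← hCD.2.2, hk.2]; exact hp
    have e2 : ccPol ED (k x') = false := by rw [← hCD.2.2, hk.2]; exact hp'
    have hb : (k x').1 = !(k x).1 := by
      cases h1 : (k x).1 <;> cases h2 : (k x').1 <;> simp [h1, h2] at hf ⊢
    have h3 : k x' = (!(k x).1, (k x).2) := Prod.ext hb he.symm
    rw [h3, ccPol_not] at e2
    rw [show ccPol ED ((k x).1, (k x).2) = ccPol ED (k x) from rfl, e1] at e2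
    simp at e2

end Univ


section Univ2

variable {A B C D X : Type u}

lemma companion_exists (EX : ESP X) (EA : ESP A) (EB : ESP B) (EC : ESP C)
    (CA : ESP (Bool × A)) (CB : ESP (Bool × B))
    (hCA : IsCopycatOf EA CA) (hCB : IsCopycatOf EB CB)
    (f : A → C) (g : B → C) (hg : IsESPMap EB EC g)
    (h₁ : X → Bool × A) (h₂ : X → Bool × B)
    (hm₁ : IsESPMap EX CA h₁) (hm₂ : IsESPMap EX CB h₂)
    (hβ : ∀ x, (h₂ x).1 = (h₁ x).1)
    (hfg : ∀ x, f (h₁ x).2 = g (h₂ x).2) :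
    ∀ x, EX.pol x = true → ∃ x', EX.le x' x ∧
      h₁ x' = (!(h₁ x).1, (h₁ x).2) ∧ h₂ x' = (!(h₁ x).1, (h₂ x).2) ∧
      EX.pol x' = false := by
  intro x hx
  have hzc : Config EX.toES {x' | EX.le x' x} := config_causes EX.toES x
  have hy1 : Config CA.toES (h₁ '' {x' | EX.le x' x}) := hm₁.1.1 _ hzc
  have hy2 : Config CB.toES (h₂ '' {x' | EX.le x' x}) := hm₂.1.1 _ hzc
  have hx1 : h₁ x ∈ h₁ '' {x' | EX.le x' x} := Set.mem_image_of_mem _ (EX.le_refl x)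
  have hx2 : h₂ x ∈ h₂ '' {x' | EX.le x' x} := Set.mem_image_of_mem _ (EX.le_refl x)
  have e1 : ccPol EA (h₁ x) = true := by rw [← hCA.2.2 (h₁ x), hm₁.2]; exact hx
  have e2 : ccPol EB (h₂ x) = true := by rw [← hCB.2.2 (h₂ x), hm₂.2]; exact hx
  have hc1 : (!(h₁ x).1, (h₁ x).2) ∈ h₁ '' {x' | EX.le x' x} :=
    cc_config_comp EA CA hCA hy1 (i := (h₁ x).1) (a := (h₁ x).2) hx1 e1
  have hc2 : (!(h₂ x).1, (h₂ x).2) ∈ h₂ '' {x' | EX.le x' x} :=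
    cc_config_comp EB CB hCB hy2 (i := (h₂ x).1) (a := (h₂ x).2) hx2 e2
  obtain ⟨xb, hxble, hxbeq⟩ := hc1
  obtain ⟨xs, hxsle, hxseq⟩ := hc2
  have hfst : (h₂ xb).1 = !(h₁ x).1 := by rw [hβ, hxbeq]
  have hsnd1 : (h₁ xb).2 = (h₁ x).2 := by rw [hxbeq]
  have hgeq : g (h₂ xb).2 = g (h₂ x).2 := by rw [← hfg, ← hfg, hsnd1]
  have hproj : Config EB.toES {b | (!(h₁ x).1, b) ∈ h₂ '' {x' | EX.le x' x}} :=
    cc_config_proj EB CB hCB hy2 _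
  have hb1 : (h₂ xb).2 ∈ {b | (!(h₁ x).1, b) ∈ h₂ '' {x' | EX.le x' x}} := by
    have h6 : h₂ xb = (!(h₁ x).1, (h₂ xb).2) := Prod.ext hfst rfl
    exact Set.mem_setOf_eq ▸ ⟨xb, hxble, h6⟩
  have hb2 : (h₂ x).2 ∈ {b | (!(h₁ x).1, b) ∈ h₂ '' {x' | EX.le x' x}} := by
    have h7 : h₂ xs = (!(h₁ x).1, (h₂ x).2) := by rw [hxseq, hβ]
    exact Set.mem_setOf_eq ▸ ⟨xs, hxsle, h7⟩
  have hbeq : (h₂ xb).2 = (h₂ x).2 := hg.1.2 _ hproj _ hb1 _ hb2 hgeq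
  refine ⟨xb, hxble, hxbeq, Prod.ext hfst hbeq, ?_⟩
  have h8 : CA.pol (h₁ xb) = ccPol EA (h₁ xb) := hCA.2.2 _
  rw [hm₁.2] at h8
  rw [h8, hxbeq, ccPol_not, e1]
  rfl

/-- Carrier for the configuration-restricted side esp. -/
def ZC (h₁ : X → Bool × A) (w : Set X) (i : Bool) : Type u :=
  {x : X // x ∈ w ∧ (h₁ x).1 = i}

def ZESP (EX : ESP X) (h₁ : X → Bool × A) (w : Set X) (i : Bool) : ESP (ZC h₁ w i) where
  le a b := EX.le a.val b.val
  le_refl a := EX.le_refl _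
  le_trans h h' := EX.le_trans h h'
  le_antisymm h h' := Subtype.ext (EX.le_antisymm h h')
  Con := {Y | Y.Finite}
  con_empty := Set.finite_empty
  causes_finite e := by
    have h1 : Set.Finite ((Subtype.val : ZC h₁ w i → X) ⁻¹' {e' | EX.le e' e.val}) :=
      (EX.causes_finite e.val).preimage (Set.injOn_of_injective Subtype.val_injective)
    exact h1
  con_finite _ h := h
  con_singleton _ := Set.finite_singleton _
  con_mono h hY := hY.subset h
  con_extend hY _ _ := hY.union (Set.finite_singleton _)
  pol x := cond i (EX.pol x.val) (!EX.pol x.val)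

def iotaZ (h₁ : X → Bool × A) (w : Set X) (i : Bool) (x : ZC h₁ w i) : XiC h₁ i :=
  ⟨x.val, x.2.2⟩

lemma iotaZ_map (EX : ESP X) (h₁ : X → Bool × A) (w : Set X) (i : Bool)
    (hw : Config EX.toES w) :
    IsESPMap (ZESP EX h₁ w i) (XiESP EX h₁ i) (iotaZ h₁ w i) := by
  refine ⟨⟨?_, ?_⟩, ?_⟩
  · intro S hS
    constructor
    · show Dv EX Subtype.val (iotaZ h₁ w i '' S) ∈ EX.Con
      refine EX.con_mono (fun x' hx' => ?_) hw.1
      obtain ⟨s, ⟨s0, hs0, rfl⟩, hle⟩ := hx'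
      exact hw.2 s0.2.1 hle
    · rintro s ⟨s0, hs0, rfl⟩ t hlt
      have htw : t.val ∈ w := hw.2 s0.2.1 hlt
      have : (⟨t.val, htw, t.2⟩ : ZC h₁ w i) ∈ S := hS.2 hs0 hlt
      exact ⟨⟨t.val, htw, t.2⟩, this, rfl⟩
  · intro S _ s hs t ht heq
    exact Subtype.ext (congrArg (Subtype.val : XiC h₁ i → X) heq)
  · intro s; rfl

/-- Carrier of the "merged" esp: negative events of `w`. -/
def NYC (EX : ESP X) (w : Set X) : Type u := {y : X // y ∈ w ∧ EX.pol y = false}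

/-- Merge positives into their companions. -/
def qf (EX : ESP X) (c : X → X) (x : X) : X := if EX.pol x = true then c x else x

lemma qf_le (EX : ESP X) (c : X → X)
    (hc1 : ∀ x, EX.pol x = true → EX.le (c x) x) (x : X) : EX.le (qf EX c x) x := by
  unfold qf
  by_cases h : EX.pol x = true
  · rw [if_pos h]; exact hc1 x h
  · rw [if_neg h]; exact EX.le_refl x

lemma qf_neg (EX : ESP X) (c : X → X) {x : X} (h : EX.pol x = false) : qf EX c x = x := by
  unfold qf; rw [if_neg]; simp [h]

lemma qf_pos (EX : ESP X) (c : X → X) {x : X} (h : EX.pol x = true) : qf EX c x = c x := by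
  unfold qf; rw [if_pos h]

def leY (EX : ESP X) (h₁ : X → Bool × A) (c : X → X) (w : Set X)
    (y y' : NYC EX w) : Prop :=
  ∀ (i : Bool) (S : Set (ZC h₁ w i)), Config (ZESP EX h₁ w i).toES S →
    (∃ s ∈ S, qf EX c s.val = y'.val) → (∃ s ∈ S, qf EX c s.val = y.val)

/-- The down-set of an element of `w` on its own side, as a `Z`-configuration. -/
lemma z_downset_config (EX : ESP X) (h₁ : X → Bool × A) (w : Set X) (i : Bool) (x : X) :
    Config (ZESP EX h₁ w i).toES {s : ZC h₁ w i | EX.le s.val x} := by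
  constructor
  · show Set.Finite _
    have h1 : Set.Finite ((Subtype.val : ZC h₁ w i → X) ⁻¹' {e' | EX.le e' x}) :=
      (EX.causes_finite x).preimage (Set.injOn_of_injective Subtype.val_injective)
    exact h1
  · intro s hs t hlt
    exact EX.le_trans hlt hs

def YESP (EX : ESP X) (h₁ : X → Bool × A) (c : X → X) (w : Set X)
    (hwfin : w.Finite) (hc1 : ∀ x, EX.pol x = true → EX.le (c x) x) :
    ESP (NYC EX w) where
  le := leY EX h₁ c w
  le_refl y := fun i S _ h => h
  le_trans h h' := fun i S hS hm => h i S hS (h' i S hS hm)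
  le_antisymm {y y'} h h' := by
    have key : ∀ u v : NYC EX w, leY EX h₁ c w u v → EX.le u.val v.val := by
      intro u v huv
      have hS := z_downset_config EX h₁ w (h₁ v.val).1 v.val
      have hv : ∃ s ∈ {s : ZC h₁ w (h₁ v.val).1 | EX.le s.val v.val},
          qf EX c s.val = v.val :=
        ⟨⟨v.val, v.2.1, rfl⟩, EX.le_refl v.val, qf_neg EX c v.2.2⟩
      obtain ⟨s, hs, hq⟩ := huv _ _ hS hv
      have := qf_le EX c hc1 s.val
      rw [hq] at this
      exact EX.le_trans this hs
    exact Subtype.ext (EX.le_antisymm (key y y' h) (key y' y h'))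
  Con := {T | ∃ (i : Bool), ∃ (S : Set (ZC h₁ w i)), Config (ZESP EX h₁ w i).toES S ∧
    ∀ y ∈ T, ∃ s ∈ S, qf EX c s.val = y.val}
  con_empty := ⟨true, ∅, ⟨Set.finite_empty, fun s hs => absurd hs (Set.notMem_empty s)⟩,
    fun y hy => absurd hy (Set.notMem_empty y)⟩
  causes_finite e := by
    have hfw : Finite ↥w := hwfin.to_subtype
    have : Finite (NYC EX w) :=
      Finite.of_injective (fun y : NYC EX w => (⟨y.val, y.2.1⟩ : ↥w))
        (fun a b hab => Subtype.ext (congrArg (Subtype.val : ↥w → X) hab))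
    exact Set.toFinite _
  con_finite T _ := by
    have hfw : Finite ↥w := hwfin.to_subtype
    have : Finite (NYC EX w) :=
      Finite.of_injective (fun y : NYC EX w => (⟨y.val, y.2.1⟩ : ↥w))
        (fun a b hab => Subtype.ext (congrArg (Subtype.val : ↥w → X) hab))
    exact Set.toFinite _
  con_singleton y := by
    refine ⟨(h₁ y.val).1, {s : ZC h₁ w (h₁ y.val).1 | EX.le s.val y.val},
      z_downset_config EX h₁ w _ _, ?_⟩
    intro y' hy'
    have hyy : y' = y := hy'
    rw [hyy]
    exact ⟨⟨y.val, y.2.1, rfl⟩, EX.le_refl y.val, qf_neg EX c y.2.2⟩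
  con_mono {T T'} h hT := by
    obtain ⟨i, S, hS, hcov⟩ := hT
    exact ⟨i, S, hS, fun y hy => hcov y (h hy)⟩
  con_extend {T e e'} hT hle he' := by
    obtain ⟨i, S, hS, hcov⟩ := hT
    refine ⟨i, S, hS, ?_⟩
    rintro y (hy | rfl)
    · exact hcov y hy
    · exact hle i S hS (hcov e' he')
  pol y := !(h₁ y.val).1

end Univ2


section Univ3

variable {A B C D X : Type u}

lemma yesp_map (EX : ESP X) (ED : ESP D) (CD : ESP (Bool × D))
    (hCD : IsCopycatOf ED CD)
    (h₁ : X → Bool × A) (k : X → Bool × D) (hk : IsESPMap EX CD k)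
    (hk1 : ∀ x, (k x).1 = (h₁ x).1)
    (c : X → X) (w : Set X) (hw : Config EX.toES w) (hwfin : w.Finite)
    (hc1 : ∀ x, EX.pol x = true → EX.le (c x) x)
    (hc4 : ∀ x, EX.pol x = true → EX.pol (c x) = false)
    (hkq : ∀ x, EX.pol x = true → k (c x) = (!(h₁ x).1, (k x).2)) :
    IsESPMap (YESP EX h₁ c w hwfin hc1) ED (fun y => (k y.val).2) := by
  have hq2 : ∀ x, (k (qf EX c x)).2 = (k x).2 := by
    intro x
    cases hp : EX.pol x
    · rw [qf_neg EX c hp]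
    · rw [qf_pos EX c hp, hkq x hp]
  have hZmap : ∀ i, IsESPMap (ZESP EX h₁ w i) ED
      (fun s : ZC h₁ w i => (k s.val).2) := by
    intro i
    have h := isESPMap_comp (iotaZ_map EX h₁ w i hw)
      (side_map EX h₁ i ED CD hCD k hk hk1)
    exact h
  have hqw : ∀ x ∈ w, qf EX c x ∈ w := fun x hx => hw.2 hx (qf_le EX c hc1 x)
  have hqneg : ∀ x, EX.pol (qf EX c x) = false := by
    intro x
    cases hp : EX.pol x
    · rw [qf_neg EX c hp]; exact hp
    · rw [qf_pos EX c hp]; exact hc4 x hp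
  refine ⟨⟨?_, ?_⟩, ?_⟩
  · intro T hT
    obtain ⟨i, S, hS, hcov⟩ := hT.1
    have hSim : Config ED.toES ((fun s : ZC h₁ w i => (k s.val).2) '' S) :=
      (hZmap i).1.1 S hS
    have hsub : (fun y : NYC EX w => (k y.val).2) '' T ⊆
        (fun s : ZC h₁ w i => (k s.val).2) '' S := by
      rintro d ⟨y, hy, rfl⟩
      obtain ⟨s, hs, hqs⟩ := hcov y hy
      refine ⟨s, hs, ?_⟩
      have := hq2 s.val
      rw [hqs] at this
      exact this.symm
    constructor
    · exact ED.con_mono hsub hSim.1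
    · rintro d ⟨y₀, hy₀, rfl⟩ d' hle
      obtain ⟨s₀, hs₀, hqs₀⟩ := hcov y₀ hy₀
      have hd₀ : (k y₀.val).2 ∈ (fun s : ZC h₁ w i => (k s.val).2) '' S := by
        refine ⟨s₀, hs₀, ?_⟩
        have := hq2 s₀.val
        rw [hqs₀] at this
        exact this.symm
      obtain ⟨s₁, hs₁, hks₁⟩ := hSim.2 hd₀ hle
      refine ⟨⟨qf EX c s₁.val, hqw _ s₁.2.1, hqneg _⟩, ?_, ?_⟩
      · refine hT.2 hy₀ ?_
        intro j S' hS' hmq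
        obtain ⟨s', hs', hq'⟩ := hmq
        have h1 : (k y₀.val).2 ∈ (fun s : ZC h₁ w j => (k s.val).2) '' S' := by
          refine ⟨s', hs', ?_⟩
          have := hq2 s'.val
          rw [hq'] at this
          exact this.symm
        obtain ⟨s'', hs'', hks''⟩ := ((hZmap j).1.1 S' hS').2 h1 hle
        refine ⟨s'', hs'', ?_⟩
        refine collide EX ED CD hCD k hk hw (hqw _ s''.2.1) (hqw _ s₁.2.1)
          (hqneg _) (hqneg _) ?_
        have hks₁' : (k s₁.val).2 = d' := hks₁
        have hksx : (k s''.val).2 = d' := hks''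
        rw [hq2, hq2, hks₁', hksx]
      · show (k (qf EX c s₁.val)).2 = d'
        rw [hq2]; exact hks₁
  · intro T hT y hy y' hy' heq
    exact Subtype.ext (collide EX ED CD hCD k hk hw y.2.1 y'.2.1 y.2.2 y'.2.2 heq)
  · intro y
    have h5 : ccPol ED (k y.val) = false := by
      rw [← hCD.2.2, hk.2]; exact y.2.2
    have h6 : k y.val = ((h₁ y.val).1, (k y.val).2) := Prod.ext (hk1 y.val) rfl
    rw [h6] at h5
    show ED.pol ((k y.val).2) = !(h₁ y.val).1
    cases hb : (h₁ y.val).1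
    · rw [hb] at h5
      simp only [ccPol, cond_false] at h5
      cases hp : ED.pol ((k y.val).2)
      · rw [hp] at h5; simp at h5
      · rfl
    · rw [hb] at h5
      simp only [ccPol, cond_true] at h5
      rw [h5]
      rfl

def nZ (EX : ESP X) (h₁ : X → Bool × A) (c : X → X) (w : Set X)
    (hw : Config EX.toES w) (hc1 : ∀ x, EX.pol x = true → EX.le (c x) x)
    (hc4 : ∀ x, EX.pol x = true → EX.pol (c x) = false)
    (i : Bool) (s : ZC h₁ w i) : NYC EX w :=
  ⟨qf EX c s.val, hw.2 s.2.1 (qf_le EX c hc1 s.val), by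
    cases hp : EX.pol s.val
    · rw [qf_neg EX c hp]; exact hp
    · rw [qf_pos EX c hp]; exact hc4 _ hp⟩

lemma nZ_map (EX : ESP X) (EA : ESP A) (CA : ESP (Bool × A))
    (h₁ : X → Bool × A) (hm₁ : IsESPMap EX CA h₁) (c : X → X) (w : Set X)
    (hw : Config EX.toES w) (hwfin : w.Finite)
    (hc1 : ∀ x, EX.pol x = true → EX.le (c x) x)
    (hc4 : ∀ x, EX.pol x = true → EX.pol (c x) = false)
    (hc2 : ∀ x, EX.pol x = true → h₁ (c x) = (!(h₁ x).1, (h₁ x).2))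
    (i : Bool) :
    IsMap (ZESP EX h₁ w i).toES (YESP EX h₁ c w hwfin hc1).toES
      (nZ EX h₁ c w hw hc1 hc4 i) := by
  constructor
  · intro S hS
    constructor
    · exact ⟨i, S, hS, by rintro y ⟨s, hs, rfl⟩; exact ⟨s, hs, rfl⟩⟩
    · rintro y ⟨s, hs, rfl⟩ y₀ hle
      obtain ⟨s₁, hs₁, hq₁⟩ := hle i S hS ⟨s, hs, rfl⟩
      exact ⟨s₁, hs₁, Subtype.ext hq₁⟩
  · intro S _ s hs t ht heq
    have hv : qf EX c s.val = qf EX c t.val :=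
      congrArg (Subtype.val : NYC EX w → X) heq
    cases hps : EX.pol s.val <;> cases hpt : EX.pol t.val
    · rw [qf_neg EX c hps, qf_neg EX c hpt] at hv; exact Subtype.ext hv
    · exfalso
      rw [qf_neg EX c hps, qf_pos EX c hpt] at hv
      have h1 : (h₁ (c t.val)).1 = !(h₁ t.val).1 := by rw [hc2 t.val hpt]
      rw [← hv] at h1
      rw [s.2.2, t.2.2] at h1
      simp at h1
    · exfalso
      rw [qf_pos EX c hps, qf_neg EX c hpt] at hv
      have h1 : (h₁ (c s.val)).1 = !(h₁ s.val).1 := by rw [hc2 s.val hps]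
      rw [hv] at h1
      rw [s.2.2, t.2.2] at h1
      simp at h1
    · rw [qf_pos EX c hps, qf_pos EX c hpt] at hv
      have h1 := hc2 s.val hps
      have h2 := hc2 t.val hpt
      rw [hv, h2] at h1
      have hsnd := congrArg (Prod.snd : Bool × A → A) h1
      have heq1 : h₁ s.val = h₁ t.val :=
        Prod.ext (by rw [s.2.2, t.2.2]) (by exact hsnd.symm)
      exact Subtype.ext (hm₁.1.2 w hw s.val s.2.1 t.val t.2.1 heq1)

end Univ3

end S8
/-- the copycat construction preserves pullbacks of esps. -/
theorem statement8 {A B C P : Type u} (EA : ESP A) (EB : ESP B) (EC : ESP C) (EP : ESP P)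
    (f : A → C) (g : B → C) (Pi1 : P → A) (Pi2 : P → B)
    (hf : IsESPMap EA EC f) (hg : IsESPMap EB EC g)
    (hpb : IsPullbackESP EP EA EB EC Pi1 Pi2 f g)
    (CA : ESP (Bool × A)) (hCA : IsCopycatOf EA CA)
    (CB : ESP (Bool × B)) (hCB : IsCopycatOf EB CB)
    (Ccc : ESP (Bool × C)) (hCc : IsCopycatOf EC Ccc)
    (CP : ESP (Bool × P)) (hCP : IsCopycatOf EP CP) :
    IsPullbackESP CP CA CB Ccc (ccMap Pi1) (ccMap Pi2) (ccMap f) (ccMap g) := by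
  obtain ⟨hP1, hP2, hPcomm, hPuniv⟩ := hpb
  refine ⟨S8.ccMap_map EP EA CP CA hCP hCA Pi1 hP1,
          S8.ccMap_map EP EB CP CB hCP hCB Pi2 hP2, ?_, ?_⟩
  · funext p
    show (p.1, f (Pi1 p.2)) = (p.1, g (Pi2 p.2))
    have hcf := congrFun hPcomm p.2
    simp only [Function.comp_apply] at hcf
    rw [hcf]
  · intro X EX h₁ h₂ hm₁ hm₂ hcomm
    -- basic consequences of the commuting square
    have hβ : ∀ x, (h₂ x).1 = (h₁ x).1 := by
      intro x
      have hc := congrFun hcomm x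
      have h := congrArg (Prod.fst : Bool × C → Bool) hc
      exact h.symm
    have hfg : ∀ x, f (h₁ x).2 = g (h₂ x).2 := by
      intro x
      have h := congrArg (Prod.snd : Bool × C → C) (congrFun hcomm x)
      exact h
    -- companions
    have hcomp := S8.companion_exists EX EA EB EC CA CB hCA hCB f g hg h₁ h₂
      hm₁ hm₂ hβ hfg
    choose! c hc1 hc2 hc3 hc4 using hcomp
    -- side maps and the pullback maps u i
    have hαmap : ∀ i, IsESPMap (S8.XiESP EX h₁ i) EA
        (fun s : S8.XiC h₁ i => (h₁ s.val).2) :=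
      fun i => S8.side_map EX h₁ i EA CA hCA h₁ hm₁ (fun _ => rfl)
    have hγmap : ∀ i, IsESPMap (S8.XiESP EX h₁ i) EB
        (fun s : S8.XiC h₁ i => (h₂ s.val).2) :=
      fun i => S8.side_map EX h₁ i EB CB hCB h₂ hm₂ hβ
    have hcommi : ∀ i, f ∘ (fun s : S8.XiC h₁ i => (h₁ s.val).2)
        = g ∘ (fun s : S8.XiC h₁ i => (h₂ s.val).2) :=
      fun i => funext fun s => hfg s.val
    have hU := fun i => hPuniv (S8.XiESP EX h₁ i) _ _ (hαmap i) (hγmap i) (hcommi i)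
    choose u hu huniq using hU
    -- cast lemma
    have ucast : ∀ (x : X) (i : Bool) (hxi : (h₁ x).1 = i),
        u i ⟨x, hxi⟩ = u (h₁ x).1 ⟨x, rfl⟩ := by
      intro x i hxi
      cases hxi
      rfl
    -- helper: qf preserves the images
    have hq1 : ∀ x, (h₁ (S8.qf EX c x)).2 = (h₁ x).2 := by
      intro x
      cases hp : EX.pol x
      · rw [S8.qf_neg EX c hp]
      · rw [S8.qf_pos EX c hp, hc2 x hp]
    have hq2 : ∀ x, (h₂ (S8.qf EX c x)).2 = (h₂ x).2 := by
      intro x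
      cases hp : EX.pol x
      · rw [S8.qf_neg EX c hp]
      · rw [S8.qf_pos EX c hp, hc3 x hp]
    -- COHERENCE: on companions the two pullback maps agree
    have hcoh : ∀ x, EX.pol x = true →
        u (h₁ (c x)).1 ⟨c x, rfl⟩ = u (h₁ x).1 ⟨x, rfl⟩ := by
      intro x hx
      set w := {x' | EX.le x' x} with hwdef
      have hw : Config EX.toES w := S8.config_causes EX.toES x
      have hwfin : w.Finite := EX.causes_finite x
      have haY := S8.yesp_map EX EA CA hCA h₁ h₁ hm₁ (fun _ => rfl) c w hw hwfin
        hc1 hc4 hc2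
      have hbY := S8.yesp_map EX EB CB hCB h₁ h₂ hm₂ hβ c w hw hwfin hc1 hc4 hc3
      have hcomY : f ∘ (fun y : S8.NYC EX w => (h₁ y.val).2)
          = g ∘ (fun y : S8.NYC EX w => (h₂ y.val).2) := funext fun y => hfg y.val
      obtain ⟨m, hm, -⟩ := hPuniv (S8.YESP EX h₁ c w hwfin hc1) _ _ haY hbY hcomY
      have key : ∀ i : Bool, u i ∘ (S8.iotaZ h₁ w i)
          = m ∘ (S8.nZ EX h₁ c w hw hc1 hc4 i) := by
        intro i
        have hαZ : IsESPMap (S8.ZESP EX h₁ w i) EA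
            (fun s : S8.ZC h₁ w i => (h₁ s.val).2) := by
          have h := S8.isESPMap_comp (S8.iotaZ_map EX h₁ w i hw) (hαmap i)
          exact h
        have hγZ : IsESPMap (S8.ZESP EX h₁ w i) EB
            (fun s : S8.ZC h₁ w i => (h₂ s.val).2) := by
          have h := S8.isESPMap_comp (S8.iotaZ_map EX h₁ w i hw) (hγmap i)
          exact h
        have hcomZ : f ∘ (fun s : S8.ZC h₁ w i => (h₁ s.val).2)
            = g ∘ (fun s : S8.ZC h₁ w i => (h₂ s.val).2) := funext fun s => hfg s.val
        obtain ⟨v, hv, hvuniq⟩ := hPuniv (S8.ZESP EX h₁ w i) _ _ hαZ hγZ hcomZ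
        have e1 : u i ∘ (S8.iotaZ h₁ w i) = v := by
          apply hvuniq
          refine ⟨?_, ?_, ?_⟩
          · have h := S8.isESPMap_comp (S8.iotaZ_map EX h₁ w i hw) (hu i).1
            exact h
          · funext s
            have h := congrFun (hu i).2.1 (S8.iotaZ h₁ w i s)
            exact h
          · funext s
            have h := congrFun (hu i).2.2 (S8.iotaZ h₁ w i s)
            exact h
        have e2 : m ∘ (S8.nZ EX h₁ c w hw hc1 hc4 i) = v := by
          apply hvuniq
          refine ⟨⟨?_, ?_⟩, ?_, ?_⟩
          · exact S8.isMap_comp (S8.nZ_map EX EA CA h₁ hm₁ c w hw hwfin hc1 hc4 hc2 i)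
              hm.1.1
          · intro s
            have hpols := hm.1.2 (S8.nZ EX h₁ c w hw hc1 hc4 i s)
            show EP.pol (m (S8.nZ EX h₁ c w hw hc1 hc4 i s))
              = cond i (EX.pol s.val) (!EX.pol s.val)
            rw [hpols]
            show (!(h₁ (S8.qf EX c s.val)).1) = cond i (EX.pol s.val) (!EX.pol s.val)
            cases hp : EX.pol s.val
            · rw [S8.qf_neg EX c hp, s.2.2]
              cases i <;> rfl
            · rw [S8.qf_pos EX c hp, hc2 s.val hp]
              show (!(!(h₁ s.val).1)) = cond i true false
              rw [Bool.not_not, s.2.2]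
              cases i <;> rfl
          · funext s
            have h := congrFun hm.2.1 (S8.nZ EX h₁ c w hw hc1 hc4 i s)
            exact h.trans (hq1 s.val)
          · funext s
            have h := congrFun hm.2.2 (S8.nZ EX h₁ c w hw hc1 hc4 i s)
            exact h.trans (hq2 s.val)
        exact e1.trans e2.symm
      have hxw : x ∈ w := EX.le_refl x
      have hcxw : c x ∈ w := hc1 x hx
      have k1 := congrFun (key (h₁ x).1) ⟨x, hxw, rfl⟩
      have k2 := congrFun (key (h₁ (c x)).1) ⟨c x, hcxw, rfl⟩
      have harg : (S8.nZ EX h₁ c w hw hc1 hc4 (h₁ x).1 ⟨x, hxw, rfl⟩ : S8.NYC EX w)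
          = S8.nZ EX h₁ c w hw hc1 hc4 (h₁ (c x)).1 ⟨c x, hcxw, rfl⟩ := by
        apply Subtype.ext
        show S8.qf EX c x = S8.qf EX c (c x)
        rw [S8.qf_pos EX c hx, S8.qf_neg EX c (hc4 x hx)]
      have k1' : u (h₁ x).1 ⟨x, rfl⟩ = m (S8.nZ EX h₁ c w hw hc1 hc4 (h₁ x).1 ⟨x, hxw, rfl⟩) := k1
      have k2' : u (h₁ (c x)).1 ⟨c x, rfl⟩
          = m (S8.nZ EX h₁ c w hw hc1 hc4 (h₁ (c x)).1 ⟨c x, hcxw, rfl⟩) := k2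
      rw [k1', k2', harg]
    -- the candidate map
    set hfun : X → Bool × P := fun x => ((h₁ x).1, u (h₁ x).1 ⟨x, rfl⟩) with hfundef
    have hpolh : ∀ x, CP.pol (hfun x) = EX.pol x := by
      intro x
      rw [hCP.2.2]
      have hp : EP.pol (u (h₁ x).1 ⟨x, rfl⟩)
          = cond (h₁ x).1 (EX.pol x) (!EX.pol x) := (hu _).1.2 ⟨x, rfl⟩
      show ccPol EP ((h₁ x).1, u (h₁ x).1 ⟨x, rfl⟩) = EX.pol x
      generalize hgen : u (h₁ x).1 ⟨x, rfl⟩ = p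
      rw [hgen] at hp
      cases hb : (h₁ x).1 <;> rw [hb] at hp
      · show ccPol EP (false, p) = EX.pol x
        simp only [ccPol, cond_false] at hp ⊢
        rw [hp, Bool.not_not]
      · show ccPol EP (true, p) = EX.pol x
        simp only [ccPol, cond_true] at hp ⊢
        exact hp
    have hzc : ∀ z, Config EX.toES z → ∀ i : Bool,
        Config (S8.XiESP EX h₁ i).toES {s : S8.XiC h₁ i | s.val ∈ z} := by
      intro z hz i
      constructor
      · show S8.Dv EX Subtype.val {s : S8.XiC h₁ i | s.val ∈ z} ∈ EX.Con
        refine EX.con_mono (fun x' hx' => ?_) hz.1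
        obtain ⟨s, hs, hle⟩ := hx'
        exact hz.2 hs hle
      · intro s hs t hlt
        exact hz.2 hs hlt
    have hset : ∀ z, ∀ i : Bool,
        {p | (i, p) ∈ hfun '' z} = u i '' {s : S8.XiC h₁ i | s.val ∈ z} := by
      intro z i
      ext p
      constructor
      · rintro ⟨x, hxz, heq⟩
        have hfst : (h₁ x).1 = i := congrArg (Prod.fst : Bool × P → Bool) heq
        refine ⟨⟨x, hfst⟩, hxz, ?_⟩
        rw [ucast x i hfst]
        exact congrArg (Prod.snd : Bool × P → P) heq
      · rintro ⟨s, hsz, rfl⟩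
        refine ⟨s.val, hsz, ?_⟩
        show ((h₁ s.val).1, u (h₁ s.val).1 ⟨s.val, rfl⟩) = (i, u i s)
        refine Prod.ext s.2 ?_
        show u (h₁ s.val).1 ⟨s.val, rfl⟩ = u i s
        exact (ucast s.val i s.2).symm
    have hdc : ∀ z, Config EX.toES z → ∀ q r, ccBase EP q r →
        r ∈ hfun '' z → q ∈ hfun '' z := by
      intro z hz q r hbase hr
      obtain ⟨x, hxz, rfl⟩ := hr
      rcases hbase with ⟨hfst, hle⟩ | ⟨hsnd, hne, hpos⟩
      · have hcfg : Config EP.toES (u (h₁ x).1 '' {s : S8.XiC h₁ (h₁ x).1 | s.val ∈ z}) :=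
          (hu _).1.1.1 _ (hzc z hz _)
        have hmem : u (h₁ x).1 ⟨x, rfl⟩
            ∈ u (h₁ x).1 '' {s : S8.XiC h₁ (h₁ x).1 | s.val ∈ z} :=
          ⟨⟨x, rfl⟩, hxz, rfl⟩
        have hq2m : q.2 ∈ u (h₁ x).1 '' {s : S8.XiC h₁ (h₁ x).1 | s.val ∈ z} :=
          hcfg.2 hmem hle
        obtain ⟨s, hsz, hus⟩ := hq2m
        refine ⟨s.val, hsz, ?_⟩
        show ((h₁ s.val).1, u (h₁ s.val).1 ⟨s.val, rfl⟩) = q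
        refine Prod.ext ?_ ?_
        · show (h₁ s.val).1 = q.1
          rw [s.2]
          exact hfst.symm
        · show u (h₁ s.val).1 ⟨s.val, rfl⟩ = q.2
          rw [← hus]
          exact (ucast s.val (h₁ x).1 s.2).symm
      · have hxpos : EX.pol x = true := by
          rw [← hpolh x, hCP.2.2]
          exact hpos
        have hcz : c x ∈ z := hz.2 hxz (hc1 x hxpos)
        refine ⟨c x, hcz, ?_⟩
        show ((h₁ (c x)).1, u (h₁ (c x)).1 ⟨c x, rfl⟩) = q
        refine Prod.ext ?_ ?_
        · show (h₁ (c x)).1 = q.1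
          have h5 : (h₁ (c x)).1 = !(h₁ x).1 := by rw [hc2 x hxpos]
          have h6 : q.1 = !(h₁ x).1 := by
            have : q.1 ≠ (h₁ x).1 := hne
            cases hq : q.1 <;> cases hh : (h₁ x).1 <;> simp [hq, hh] at this ⊢
          rw [h5, h6]
        · show u (h₁ (c x)).1 ⟨c x, rfl⟩ = q.2
          rw [hcoh x hxpos]
          exact hsnd.symm
    have hcfgh : ∀ z, Config EX.toES z → Config CP.toES (hfun '' z) := by
      intro z hz
      refine S8.cc_config_mk EP CP hCP ((EX.con_finite z hz.1).image hfun) (hdc z hz) ?_ ?_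
      · rw [hset z false]
        exact ((hu false).1.1.1 _ (hzc z hz false)).1
      · rw [hset z true]
        exact ((hu true).1.1.1 _ (hzc z hz true)).1
    refine ⟨hfun, ⟨⟨⟨hcfgh, ?_⟩, hpolh⟩, ?_, ?_⟩, ?_⟩
    · -- local injectivity
      intro z hz x hx x' hx' heq
      have hfst : (h₁ x).1 = (h₁ x').1 := congrArg (Prod.fst : Bool × P → Bool) heq
      have hsnd := congrArg (Prod.snd : Bool × P → P) heq
      have h2 : u (h₁ x).1 ⟨x', hfst.symm⟩ = u (h₁ x').1 ⟨x', rfl⟩ :=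
        ucast x' (h₁ x).1 hfst.symm
      have h3 : u (h₁ x).1 ⟨x, rfl⟩ = u (h₁ x).1 ⟨x', hfst.symm⟩ := by
        rw [h2]
        exact hsnd
      have h4 := (hu (h₁ x).1).1.1.2 _ (hzc z hz _) ⟨x, rfl⟩ hx ⟨x', hfst.symm⟩ hx' h3
      exact congrArg Subtype.val h4
    · funext x
      show ((h₁ x).1, Pi1 (u (h₁ x).1 ⟨x, rfl⟩)) = h₁ x
      have h := congrFun (hu (h₁ x).1).2.1 (⟨x, rfl⟩ : S8.XiC h₁ (h₁ x).1)
      exact Prod.ext rfl h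
    · funext x
      show ((h₁ x).1, Pi2 (u (h₁ x).1 ⟨x, rfl⟩)) = h₂ x
      have h := congrFun (hu (h₁ x).1).2.2 (⟨x, rfl⟩ : S8.XiC h₁ (h₁ x).1)
      exact Prod.ext (hβ x).symm h
    · -- uniqueness
      rintro h' ⟨hmap', hpr1', hpr2'⟩
      funext x
      have hfst' : ∀ y, (h' y).1 = (h₁ y).1 := by
        intro y
        have h := congrArg (Prod.fst : Bool × A → Bool) (congrFun hpr1' y)
        exact h
      have hH : ∀ i, (fun s : S8.XiC h₁ i => (h' s.val).2) = u i := by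
        intro i
        apply huniq
        refine ⟨S8.side_map EX h₁ i EP CP hCP h' hmap' hfst', ?_, ?_⟩
        · funext s
          have h := congrArg (Prod.snd : Bool × A → A) (congrFun hpr1' s.val)
          exact h
        · funext s
          have h := congrArg (Prod.snd : Bool × B → B) (congrFun hpr2' s.val)
          exact h
      have h6 := congrFun (hH (h₁ x).1) (⟨x, rfl⟩ : S8.XiC h₁ (h₁ x).1)
      show h' x = ((h₁ x).1, u (h₁ x).1 ⟨x, rfl⟩)
      refine Prod.ext (hfst' x) ?_
      show (h' x).2 = u (h₁ x).1 ⟨x, rfl⟩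
      exact h6
end

section
/- Let A be an esp equipped with a symmetry presented as a span of open, jointly monic maps l_A, r_A : Ã → A forming an equivalence, such that l_A preserves races. Then CC_{l_A} : CC_Ã → CC_A and CC_{r_A} : CC_Ã → CC_A are open maps of event structures. -/
set_option autoImplicit false
set_option maxHeartbeats 1000000

universe u

variable {E F G H : Type u}

/- ## Auxiliary lemmas for Statement 9 -/

section Stmt9Aux

variable {E F : Type u}

lemma config_finite {A : ES E} {x : Set E} (hx : Config A x) : x.Finite :=
  A.con_finite x hx.1

lemma config_of_subset {A : ES E} {x y : Set E} (hy : Config A y) (hxy : x ⊆ y)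
    (hdc : ∀ ⦃e⦄, e ∈ x → ∀ ⦃e'⦄, A.le e' e → e' ∈ x) : Config A x :=
  ⟨A.con_mono hxy hy.1, hdc⟩

lemma config_union_of_con {A : ES E} {x y : Set E} (hx : Config A x) (hy : Config A y)
    (h : x ∪ y ∈ A.Con) : Config A (x ∪ y) := by
  refine ⟨h, ?_⟩
  rintro e (he | he) e' hle
  · exact Or.inl (hx.2 he hle)
  · exact Or.inr (hy.2 he hle)

/-- Existence of a maximal element of a finite nonempty set w.r.t. a transitive
antisymmetric relation. -/
lemma exists_maximal_rel (le : E → E → Prop)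
    (htrans : ∀ {a b c}, le a b → le b c → le a c)
    (hanti : ∀ {a b}, le a b → le b a → a = b)
    {s : Set E} (hfin : s.Finite) (hne : s.Nonempty) :
    ∃ c ∈ s, ∀ d ∈ s, le c d → d = c := by
  obtain ⟨c, hc, hmin⟩ := Set.exists_min_image s
    (fun c => (s ∩ {d | le c d ∧ d ≠ c}).ncard) hfin hne
  refine ⟨c, hc, fun d hd hcd => ?_⟩
  by_contra hne'
  have hsub : s ∩ {e | le d e ∧ e ≠ d} ⊂ s ∩ {e | le c e ∧ e ≠ c} := by
    constructor
    · rintro e ⟨he, hde, hed⟩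
      refine ⟨he, htrans hcd hde, fun hec => ?_⟩
      exact hed (hanti hde (by rw [hec]; exact hcd)).symm
    · intro hsub'
      have : d ∈ s ∩ {e | le d e ∧ e ≠ d} := hsub' ⟨hd, hcd, hne'⟩
      exact this.2.2 rfl
  have := Set.ncard_lt_ncard hsub (hfin.inter_of_left _)
  exact absurd (hmin d hd) (by omega)

lemma exists_minimal_rel (le : E → E → Prop)
    (htrans : ∀ {a b c}, le a b → le b c → le a c)
    (hanti : ∀ {a b}, le a b → le b a → a = b)
    {s : Set E} (hfin : s.Finite) (hne : s.Nonempty) :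
    ∃ c ∈ s, ∀ d ∈ s, le d c → d = c := by
  obtain ⟨c, hc, hmax⟩ := exists_maximal_rel (fun a b => le b a)
    (fun h h' => htrans h' h) (fun h h' => (hanti h' h)) hfin hne
  exact ⟨c, hc, hmax⟩

/- ### Copycat configurations -/

/-- The `b`-side of a set of copycat events. -/
def side (b : Bool) (z : Set (Bool × E)) : Set E := {e | (b, e) ∈ z}

lemma mem_side {b : Bool} {z : Set (Bool × E)} {e : E} : e ∈ side b z ↔ (b, e) ∈ z :=
  Iff.rfl

lemma side_insert_same {b : Bool} {z : Set (Bool × E)} {a : E} :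
    side b (insert (b, a) z) = insert a (side b z) := by
  ext e; simp [side, Prod.ext_iff]

lemma side_insert_ne {b b' : Bool} (h : b' ≠ b) {z : Set (Bool × E)} {a : E} :
    side b' (insert (b, a) z) = side b' z := by
  ext e; simp [side, Prod.ext_iff, h]

lemma side_image {f : E → F} {b : Bool} {z : Set (Bool × E)} :
    side b (ccMap f '' z) = f '' side b z := by
  ext a
  constructor
  · rintro ⟨⟨pb, pe⟩, hp, hpe⟩
    simp only [ccMap, Prod.map, id] at hpe
    obtain ⟨h1, h2⟩ := Prod.mk.injEq .. ▸ hpe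
    exact ⟨pe, by rwa [← h1], h2⟩
  · rintro ⟨e, he, rfl⟩
    exact ⟨(b, e), he, rfl⟩

/-- A set downclosed under `ccBase` is downclosed under `ccLe`. -/
lemma ccLe_mem_of_base_closed {P : ESP E} {z : Set (Bool × E)}
    (hdc : ∀ p ∈ z, ∀ q, ccBase P q p → q ∈ z) {q p : Bool × E}
    (h : ccLe P q p) (hp : p ∈ z) : q ∈ z := by
  induction h with
  | refl => exact hp
  | tail _ h2 ih => exact ih (hdc _ hp _ h2)

lemma ccDcl_eq_self {P : ESP E} {z : Set (Bool × E)}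
    (hdc : ∀ p ∈ z, ∀ q, ccBase P q p → q ∈ z) : ccDcl P z = z := by
  ext p
  constructor
  · rintro ⟨q, hq, hle⟩; exact ccLe_mem_of_base_closed hdc hle hq
  · intro hp; exact ⟨p, hp, Relation.ReflTransGen.refl⟩

lemma cc_config_iff {P : ESP E} {C : ESP (Bool × E)} (hC : IsCopycatOf P C)
    {z : Set (Bool × E)} :
    Config C.toES z ↔ Config P.toES (side false z) ∧ Config P.toES (side true z) ∧
      (∀ e, (true, e) ∈ z → P.pol e = true → (false, e) ∈ z) ∧
      (∀ e, (false, e) ∈ z → P.pol e = false → (true, e) ∈ z) := by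
  obtain ⟨hle, hcon, hpol⟩ := hC
  constructor
  · intro hz
    have hdcl : ∀ p ∈ z, ∀ q, ccBase P q p → q ∈ z := by
      intro p hp q hq
      exact hz.2 hp ((hle q p).mpr (Relation.ReflTransGen.single hq))
    have hfin := config_finite hz
    have hzc := (hcon z).mp hz.1
    rw [ccDcl_eq_self hdcl] at hzc
    have hside : ∀ b, Config P.toES (side b z) := by
      intro b
      refine ⟨?_, ?_⟩
      · cases b
        · exact hzc.2.1
        · exact hzc.2.2
      · intro e he e' hle'
        exact hdcl _ he _ (Or.inl ⟨rfl, hle'⟩)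
    refine ⟨hside false, hside true, ?_, ?_⟩
    · intro e he hpe
      exact hdcl _ he _ (Or.inr ⟨rfl, by simp, by simp [ccPol, hpe]⟩)
    · intro e he hpe
      exact hdcl _ he _ (Or.inr ⟨rfl, by simp, by simp [ccPol, hpe]⟩)
  · rintro ⟨h0, h1, cr1, cr2⟩
    have hdcl : ∀ p ∈ z, ∀ q, ccBase P q p → q ∈ z := by
      rintro ⟨pb, pe⟩ hp ⟨qb, qe⟩ (⟨h1', h2'⟩ | ⟨h1', h2', h3'⟩)
      · simp only at h1' h2'
        subst h1'
        cases qb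
        · exact h0.2 hp h2'
        · exact h1.2 hp h2'
      · simp only at h1' h2' h3'
        subst h1'
        cases pb
        · simp only [ccPol, cond_false, Bool.not_eq_true'] at h3'
          have hq : qb = true := by
            cases qb
            · exact absurd rfl h2'
            · rfl
          subst hq
          exact cr2 _ hp h3'
        · simp only [ccPol, cond_true] at h3'
          have hq : qb = false := by
            cases qb
            · rfl
            · exact absurd rfl h2'
          subst hq
          exact cr1 _ hp h3'
    refine ⟨(hcon z).mpr ⟨?_, ?_⟩, ?_⟩
    · have : z ⊆ (Prod.mk false '' side false z) ∪ (Prod.mk true '' side true z) := by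
        rintro ⟨pb, pe⟩ hp
        cases pb
        · exact Or.inl ⟨pe, hp, rfl⟩
        · exact Or.inr ⟨pe, hp, rfl⟩
      exact Set.Finite.subset (((config_finite h0).image _).union
        ((config_finite h1).image _)) this
    · rw [ccDcl_eq_self hdcl]
      exact ⟨h0.1, h1.1⟩
    · intro p hp q hq
      exact ccLe_mem_of_base_closed hdcl ((hle q p).mp hq) hp

end Stmt9Aux

section Stmt9Main

variable {EA EAt : Type u} {A : ESP EA} {At : ESP EAt} {f : EAt → EA}

lemma cc_map_image (hf : IsMap At.toES A.toES f) (hfpol : ∀ e, A.pol (f e) = At.pol e)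
    {CA : ESP (Bool × EA)} (hCA : IsCopycatOf A CA)
    {CAt : ESP (Bool × EAt)} (hCAt : IsCopycatOf At CAt)
    {z : Set (Bool × EAt)} (hz : Config CAt.toES z) :
    Config CA.toES (ccMap f '' z) := by
  obtain ⟨h0, h1, cr1, cr2⟩ := (cc_config_iff hCAt).mp hz
  refine (cc_config_iff hCA).mpr ⟨?_, ?_, ?_, ?_⟩
  · rw [side_image]; exact hf.1 _ h0
  · rw [side_image]; exact hf.1 _ h1
  · intro a ha hpa
    have ha' : a ∈ side true (ccMap f '' z) := ha
    rw [side_image] at ha'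
    obtain ⟨e, he, rfl⟩ := ha'
    have : (false, e) ∈ z := cr1 e he (by rw [← hfpol]; exact hpa)
    exact ⟨(false, e), this, rfl⟩
  · intro a ha hpa
    have ha' : a ∈ side false (ccMap f '' z) := ha
    rw [side_image] at ha'
    obtain ⟨e, he, rfl⟩ := ha'
    have : (true, e) ∈ z := cr2 e he (by rw [← hfpol]; exact hpa)
    exact ⟨(true, e), this, rfl⟩

lemma cc_map_linj (hf : IsMap At.toES A.toES f)
    {CAt : ESP (Bool × EAt)} (hCAt : IsCopycatOf At CAt)
    {z : Set (Bool × EAt)} (hz : Config CAt.toES z)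
    {p q : Bool × EAt} (hp : p ∈ z) (hq : q ∈ z) (h : ccMap f p = ccMap f q) : p = q := by
  obtain ⟨h0, h1, _, _⟩ := (cc_config_iff hCAt).mp hz
  obtain ⟨pb, pe⟩ := p
  obtain ⟨qb, qe⟩ := q
  simp only [ccMap, Prod.map, id, Prod.mk.injEq] at h ⊢
  obtain ⟨rfl, h2⟩ := h
  refine ⟨rfl, ?_⟩
  cases pb
  · exact hf.2 _ h0 pe hp qe hq h2
  · exact hf.2 _ h1 pe hp qe hq h2

lemma ccPol_map (hfpol : ∀ e, A.pol (f e) = At.pol e) (q : Bool × EAt) :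
    ccPol A (ccMap f q) = ccPol At q := by
  obtain ⟨b, e⟩ := q
  cases b <;> simp [ccPol, ccMap, hfpol]

lemma cc_map_rigid (hf : Rigid At.toES A.toES f) (hfpol : ∀ e, A.pol (f e) = At.pol e)
    {p q : Bool × EAt} (h : ccLe At p q) : ccLe A (ccMap f p) (ccMap f q) := by
  induction h with
  | refl => exact Relation.ReflTransGen.refl
  | tail _ h2 ih =>
    refine ih.tail ?_
    obtain (⟨h1', h2'⟩ | ⟨h1', h2', h3'⟩) := h2
    · exact Or.inl ⟨by simp [ccMap, h1'], hf.2 _ _ h2'⟩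
    · refine Or.inr ⟨by simp [ccMap, Prod.map, h1'], by simpa [ccMap] using h2', ?_⟩
      rw [ccPol_map hfpol]; exact h3'

/-- Local injectivity across the two sides of a copycat configuration. -/
lemma cc_cross_linj (hf : IsMap At.toES A.toES f) (hfpol : ∀ e, A.pol (f e) = At.pol e)
    {CAt : ESP (Bool × EAt)} (hCAt : IsCopycatOf At CAt)
    {z : Set (Bool × EAt)} (hz : Config CAt.toES z)
    {b1 b2 : Bool} {e1 e2 : EAt} (h1 : (b1, e1) ∈ z) (h2 : (b2, e2) ∈ z)
    (hfe : f e1 = f e2) : e1 = e2 := by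
  obtain ⟨h0, hh1, cr1, cr2⟩ := (cc_config_iff hCAt).mp hz
  have hpol12 : At.pol e1 = At.pol e2 := by rw [← hfpol, ← hfpol, hfe]
  cases hpe : At.pol e1
  · -- both events are negative: push both to the `true` side
    have m1 : (true, e1) ∈ z := by
      cases b1
      · exact cr2 e1 h1 hpe
      · exact h1
    have m2 : (true, e2) ∈ z := by
      cases b2
      · exact cr2 e2 h2 (by rw [← hpol12]; exact hpe)
      · exact h2
    exact hf.2 _ hh1 e1 m1 e2 m2 hfe
  · -- both positive: push both to the `false` side
    have m1 : (false, e1) ∈ z := by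
      cases b1
      · exact h1
      · exact cr1 e1 h1 hpe
    have m2 : (false, e2) ∈ z := by
      cases b2
      · exact h2
      · exact cr1 e2 h2 (by rw [← hpol12]; exact hpe)
    exact hf.2 _ h0 e1 m1 e2 m2 hfe

/-- Extending a configuration `v` by `e₀` with the opposite polarity to `v \ u`,
by repeated use of race-preservation. -/
lemma ext_lemma (hf : IsMap At.toES A.toES f) (hrace : MapPresRaces At A f)
    (n : ℕ) : ∀ (u v : Set EAt) (e₀ : EAt) (pb : Bool), (v \ u).ncard = n →
    Config At.toES u → Config At.toES (insert e₀ u) → Config At.toES v → u ⊆ v →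
    (∀ c ∈ v, c ∉ u → At.pol c = pb) → At.pol e₀ = (!pb) → e₀ ∉ v →
    Config A.toES (insert (f e₀) (f '' v)) → Config At.toES (insert e₀ v) := by
  induction n using Nat.strong_induction_on with
  | _ n ih =>
  intro u v e₀ pb hn hu hue hv huv hpb hpe he0 himgcfg
  have hvfin := config_finite hv
  rcases eq_or_ne n 0 with hn0 | hn0
  · have : v \ u = ∅ := by
      rw [← Set.ncard_eq_zero hvfin.diff]
      omega
    have hvu : v = u := Set.Subset.antisymm (Set.diff_eq_empty.mp this) huv
    rwa [hvu]
  · have hne : (v \ u).Nonempty := by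
      rw [Set.nonempty_iff_ne_empty]
      intro h
      rw [h, Set.ncard_empty] at hn
      omega
    obtain ⟨c, hc, hcmax⟩ := exists_maximal_rel At.le At.le_trans At.le_antisymm
      hvfin.diff hne
    have hcv : c ∈ v := hc.1
    have hcu : c ∉ u := hc.2
    set v' := v \ {c} with hv'def
    have hv'dc : ∀ ⦃e⦄, e ∈ v' → ∀ ⦃e'⦄, At.le e' e → e' ∈ v' := by
      rintro e ⟨hev, hec⟩ e' hle
      refine ⟨hv.2 hev hle, ?_⟩
      rintro rfl
      by_cases heu : e ∈ u
      · exact hcu (hu.2 heu hle)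
      · exact hec (hcmax e ⟨hev, heu⟩ hle)
    have hv' : Config At.toES v' := config_of_subset hv Set.diff_subset hv'dc
    have huv' : u ⊆ v' := fun e he => ⟨huv he, fun hec => hcu (hec ▸ he)⟩
    have hinsv' : insert c v' = v := by
      rw [hv'def, Set.insert_diff_singleton, Set.insert_eq_self.mpr hcv]
    have hncard : (v' \ u).ncard + 1 = n := by
      have : v' \ u = (v \ u) \ {c} := by
        ext e
        simp only [hv'def, Set.mem_diff, Set.mem_singleton_iff]
        tauto
      rw [this, ← hn]
      exact Set.ncard_diff_singleton_add_one hc hvfin.diff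
    have himg_eq : insert (f e₀) (f '' v') = f '' v' ∪ f '' (insert e₀ u) := by
      rw [Set.image_insert_eq]
      ext a
      simp only [Set.mem_insert_iff, Set.mem_union]
      constructor
      · rintro (h | h)
        · exact Or.inr (Or.inl h)
        · exact Or.inl h
      · rintro (h | h | h)
        · exact Or.inr h
        · exact Or.inl h
        · exact Or.inr (Set.image_mono huv' h)
    have himgcfg' : Config A.toES (insert (f e₀) (f '' v')) := by
      rw [himg_eq]
      refine config_union_of_con (hf.1 _ hv') (hf.1 _ hue) ?_
      rw [← himg_eq]
      refine A.con_mono ?_ himgcfg.1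
      exact Set.insert_subset_insert (Set.image_mono Set.diff_subset)
    have hihcfg : Config At.toES (insert e₀ v') := by
      refine ih _ (by omega) u v' e₀ pb rfl hu hue hv' huv'
        (fun c' hc' hc'u => hpb c' (Set.diff_subset hc') hc'u) hpe
        (fun h => he0 (Set.diff_subset h)) himgcfg'
    by_contra hcon
    have hcovc : Cov At.toES v' c :=
      ⟨hv', fun h => h.2 rfl, by rw [hinsv']; exact hv⟩
    have hcove : Cov At.toES v' e₀ :=
      ⟨hv', fun h => he0 (Set.diff_subset h), hihcfg⟩
    have hpc : At.pol c = pb := hpb c hcv hcu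
    have himg_full : insert (f c) (insert (f e₀) (f '' v')) = insert (f e₀) (f '' v) := by
      rw [Set.insert_comm, ← Set.image_insert_eq, hinsv']
    cases pb
    · have := hrace v' c e₀ hcovc hcove hpc (by simpa using hpe)
        (by rw [Set.insert_comm, hinsv']; exact hcon)
      rw [himg_full] at this
      exact this himgcfg
    · have := hrace v' e₀ c hcove hcovc (by simpa using hpe) hpc
        (by rw [hinsv']; exact hcon)
      rw [Set.insert_comm, himg_full] at this
      exact this himgcfg

/-- Building an extended copycat configuration. -/
lemma cc_config_insert {CAt : ESP (Bool × EAt)} (hCAt : IsCopycatOf At CAt)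
    {x : Set (Bool × EAt)} (hx : Config CAt.toES x) (b : Bool) (e : EAt)
    (hse : Config At.toES (insert e (side b x)))
    (hcross : ccPol At (b, e) = true → e ∈ side (!b) x) :
    Config CAt.toES (insert (b, e) x) := by
  obtain ⟨h0, h1, cr1, cr2⟩ := (cc_config_iff hCAt).mp hx
  refine (cc_config_iff hCAt).mpr ⟨?_, ?_, ?_, ?_⟩
  · cases b
    · rw [side_insert_same]; exact hse
    · rw [side_insert_ne (by simp)]; exact h0
  · cases b
    · rw [side_insert_ne (by simp)]; exact h1
    · rw [side_insert_same]; exact hse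
  · rintro e' (he' | he') hpe'
    · rw [Prod.mk.injEq] at he'
      obtain ⟨hb, he⟩ := he'
      subst hb; subst he
      exact Or.inr (hcross (by simp [ccPol, hpe']))
    · exact Or.inr (cr1 e' he' hpe')
  · rintro e' (he' | he') hpe'
    · rw [Prod.mk.injEq] at he'
      obtain ⟨hb, he⟩ := he'
      subst hb; subst he
      exact Or.inr (hcross (by simp [ccPol, hpe']))
    · exact Or.inr (cr2 e' he' hpe')

/-- Lifting a single covering extension along `ccMap f`. -/
lemma cover_lift (hopen : OpenMap At.toES A.toES f) (hfpol : ∀ e, A.pol (f e) = At.pol e)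
    (hrace : MapPresRaces At A f)
    {CA : ESP (Bool × EA)} (hCA : IsCopycatOf A CA)
    {CAt : ESP (Bool × EAt)} (hCAt : IsCopycatOf At CAt)
    {x : Set (Bool × EAt)} (hx : Config CAt.toES x) {b : Bool} {a : EA}
    (hcov : Cov CA.toES (ccMap f '' x) (b, a)) :
    ∃ e, f e = a ∧ Cov CAt.toES x (b, e) := by
  have hf : IsMap At.toES A.toES f := hopen.1.1
  obtain ⟨h0, h1, cr1, cr2⟩ := (cc_config_iff hCAt).mp hx
  have hins := (cc_config_iff hCA).mp hcov.2.2
  have hbcfg : Config A.toES (insert a (f '' side b x)) := by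
    cases b
    · have := hins.1
      rwa [side_insert_same, side_image] at this
    · have := hins.2.1
      rwa [side_insert_same, side_image] at this
  have hanot : a ∉ f '' side b x := by
    rintro ⟨e, he, hfe⟩
    exact hcov.2.1 ⟨(b, e), he, by simp [ccMap, hfe]⟩
  have hside_b : Config At.toES (side b x) := by cases b; exacts [h0, h1]
  have hside_o : Config At.toES (side (!b) x) := by cases b; exacts [h1, h0]
  by_cases hpos : ccPol A (b, a) = true
  · -- positive copycat event
    have hmem : a ∈ f '' side (!b) x := by
      cases b
      · simp only [ccPol, cond_false, Bool.not_eq_true'] at hpos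
        have := hins.2.2.2 a (Set.mem_insert _ _) hpos
        rcases this with h | h
        · exact absurd h (by simp)
        · show a ∈ f '' side true x
          rw [← side_image]; exact h
      · simp only [ccPol, cond_true] at hpos
        have := hins.2.2.1 a (Set.mem_insert _ _) hpos
        rcases this with h | h
        · exact absurd h (by simp)
        · show a ∈ f '' side false x
          rw [← side_image]; exact h
    obtain ⟨e₀, he₀x, he₀f⟩ := hmem
    have hpe₀ : At.pol e₀ = A.pol a := by rw [← he₀f]; exact (hfpol e₀).symm
    have hpred : ∀ e', At.le e' e₀ → e' ≠ e₀ → e' ∈ side b x := by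
      intro e' hle hne
      have h1' : e' ∈ side (!b) x := hside_o.2 he₀x hle
      have hfle : A.le (f e') (f e₀) := hopen.1.2 _ _ hle
      have hfne : f e' ≠ f e₀ := fun h => hne (hf.2 _ hside_o e' h1' e₀ he₀x h)
      have hmem' : f e' ∈ insert a (f '' side b x) :=
        hbcfg.2 (Set.mem_insert a _) (he₀f ▸ hfle)
      have hmem'' : f e' ∈ f '' side b x := by
        rcases hmem' with h | h
        · exact absurd (h.trans he₀f.symm) hfne
        · exact h
      obtain ⟨e'', he''x, he''f⟩ := hmem''
      have : e' = e'' := cc_cross_linj hf hfpol hCAt hx h1' he''x he''f.symm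
      rwa [this]
    set w := side false x ∩ side true x with hwdef
    have hw : Config At.toES w :=
      ⟨At.con_mono Set.inter_subset_left h0.1,
        fun e he e' hle => ⟨h0.2 he.1 hle, h1.2 he.2 hle⟩⟩
    have hwsub_b : w ⊆ side b x := by
      cases b
      · exact Set.inter_subset_left
      · exact Set.inter_subset_right
    have hwsub_o : w ⊆ side (!b) x := by
      cases b
      · exact Set.inter_subset_right
      · exact Set.inter_subset_left
    have hwe : Config At.toES (insert e₀ w) := by
      refine ⟨At.con_mono (Set.insert_subset he₀x hwsub_o) hside_o.1, ?_⟩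
      rintro e (rfl | he) e' hle
      · by_cases hne : e' = e
        · exact Or.inl hne
        · refine Or.inr ?_
          have hb' : e' ∈ side b x := hpred e' hle hne
          have ho' : e' ∈ side (!b) x := hside_o.2 he₀x hle
          cases b
          · exact ⟨hb', ho'⟩
          · exact ⟨ho', hb'⟩
      · exact Or.inr (hw.2 he hle)
    have he₀notb : e₀ ∉ side b x := fun h => hanot ⟨e₀, h, he₀f⟩
    have hdiffpol : ∀ c ∈ side b x, c ∉ w → At.pol c = !(A.pol a) := by
      intro c hcb hcw
      cases b
      · simp only [ccPol, cond_false, Bool.not_eq_true'] at hpos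
        rw [hpos]
        have hcx1 : c ∉ side true x := fun h => hcw ⟨hcb, h⟩
        have : At.pol c ≠ false := fun h => hcx1 (cr2 c hcb h)
        simpa using this
      · simp only [ccPol, cond_true] at hpos
        rw [hpos]
        have hcx0 : c ∉ side false x := fun h => hcw ⟨h, hcb⟩
        have : At.pol c ≠ true := fun h => hcx0 (cr1 c hcb h)
        simpa using this
    have hext : Config At.toES (insert e₀ (side b x)) := by
      refine ext_lemma hf hrace _ w (side b x) e₀ (!(A.pol a)) rfl hw hwe hside_b
        hwsub_b hdiffpol (by rw [Bool.not_not]; exact hpe₀) he₀notb ?_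
      rw [he₀f]
      exact hbcfg
    refine ⟨e₀, he₀f, hx, he₀notb, ?_⟩
    exact cc_config_insert hCAt hx b e₀ hext (fun _ => he₀x)
  · -- negative copycat event
    have hneg : ccPol A (b, a) = false := Bool.eq_false_iff.mpr hpos
    obtain ⟨x'', hx'', hsub'', himg''⟩ := hopen.2 (side b x) (insert a (f '' side b x))
      hside_b hbcfg (Set.subset_insert _ _)
    have hamem : a ∈ f '' x'' := by rw [himg'']; exact Set.mem_insert _ _
    obtain ⟨e, hex'', hef⟩ := hamem
    have hxx : x'' = insert e (side b x) := by
      refine Set.Subset.antisymm ?_ (Set.insert_subset hex'' hsub'')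
      intro d hd
      have hfd : f d ∈ insert a (f '' side b x) := himg'' ▸ Set.mem_image_of_mem f hd
      rcases hfd with h | ⟨d', hd', hd'f⟩
      · exact Or.inl (hf.2 _ hx'' d hd e hex'' (h.trans hef.symm))
      · exact Or.inr (hf.2 _ hx'' d hd d' (hsub'' hd') hd'f.symm ▸ hd')
    have henotb : e ∉ side b x := fun h => hanot ⟨e, h, hef⟩
    have hecfg : Config At.toES (insert e (side b x)) := hxx ▸ hx''
    have hccpol : ccPol At (b, e) = false := by
      rw [← ccPol_map hfpol (b, e)]
      show ccPol A (b, f e) = false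
      rw [hef]
      exact hneg
    refine ⟨e, hef, hx, henotb, ?_⟩
    exact cc_config_insert hCAt hx b e hecfg (fun h => absurd h (by simp [hccpol]))

lemma cc_open_aux (hopen : OpenMap At.toES A.toES f) (hfpol : ∀ e, A.pol (f e) = At.pol e)
    (hrace : MapPresRaces At A f)
    {CA : ESP (Bool × EA)} (hCA : IsCopycatOf A CA)
    {CAt : ESP (Bool × EAt)} (hCAt : IsCopycatOf At CAt) (n : ℕ) :
    ∀ (x : Set (Bool × EAt)) (y : Set (Bool × EA)), Config CAt.toES x →
    Config CA.toES y → ccMap f '' x ⊆ y → (y \ ccMap f '' x).ncard = n →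
    ∃ x', Config CAt.toES x' ∧ x ⊆ x' ∧ ccMap f '' x' = y := by
  induction n using Nat.strong_induction_on with
  | _ n ih =>
  intro x y hx hy hsub hn
  have hyfin := config_finite hy
  rcases eq_or_ne n 0 with hn0 | hn0
  · have hdiff : y \ ccMap f '' x = ∅ := by
      rw [← Set.ncard_eq_zero hyfin.diff]
      omega
    exact ⟨x, hx, subset_refl _, Set.Subset.antisymm hsub (Set.diff_eq_empty.mp hdiff)⟩
  · have hne : (y \ ccMap f '' x).Nonempty := by
      rw [Set.nonempty_iff_ne_empty]
      intro h
      rw [h, Set.ncard_empty] at hn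
      omega
    obtain ⟨p, hp, hmin⟩ := exists_minimal_rel CA.le CA.le_trans CA.le_antisymm
      hyfin.diff hne
    have himgcfg := cc_map_image hopen.1.1 hfpol hCA hCAt hx
    have hins : Config CA.toES (insert p (ccMap f '' x)) := by
      refine ⟨CA.con_mono (Set.insert_subset hp.1 hsub) hy.1, ?_⟩
      rintro q (rfl | hq) q' hle
      · have hq'y : q' ∈ y := hy.2 hp.1 hle
        by_cases hq'img : q' ∈ ccMap f '' x
        · exact Or.inr hq'img
        · exact Or.inl (hmin q' ⟨hq'y, hq'img⟩ hle)
      · exact Or.inr (himgcfg.2 hq hle)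
    obtain ⟨pb, pa⟩ := p
    have hcov : Cov CA.toES (ccMap f '' x) (pb, pa) := ⟨himgcfg, hp.2, hins⟩
    obtain ⟨e, hef, hcove⟩ := cover_lift hopen hfpol hrace hCA hCAt hx hcov
    have himg_ins : ccMap f '' (insert (pb, e) x) = insert (pb, pa) (ccMap f '' x) := by
      rw [Set.image_insert_eq]
      congr 1
      simp [ccMap, hef]
    have hss : y \ insert (pb, pa) (ccMap f '' x) ⊂ y \ ccMap f '' x := by
      constructor
      · exact Set.diff_subset_diff_right (Set.subset_insert _ _)
      · intro hsub'
        exact (hsub' hp).2 (Set.mem_insert _ _)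
    have hm : (y \ ccMap f '' (insert (pb, e) x)).ncard < n := by
      rw [himg_ins, ← hn]
      exact Set.ncard_lt_ncard hss hyfin.diff
    obtain ⟨x', hx', hsub', himg'⟩ := ih _ hm (insert (pb, e) x) y hcove.2.2 hy
      (by rw [himg_ins]; exact Set.insert_subset hp.1 hsub) rfl
    exact ⟨x', hx', (Set.subset_insert _ _).trans hsub', himg'⟩

/-- The main lemma: the copycat lifting of an open, polarity-preserving,
race-preserving map is open. -/
lemma cc_open_of_racepres (hopen : OpenMap At.toES A.toES f)
    (hfpol : ∀ e, A.pol (f e) = At.pol e) (hrace : MapPresRaces At A f)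
    {CA : ESP (Bool × EA)} (hCA : IsCopycatOf A CA)
    {CAt : ESP (Bool × EAt)} (hCAt : IsCopycatOf At CAt) :
    OpenMap CAt.toES CA.toES (ccMap f) := by
  have hf : IsMap At.toES A.toES f := hopen.1.1
  refine ⟨⟨⟨fun z hz => cc_map_image hf hfpol hCA hCAt hz,
    fun z hz p hp q hq h => cc_map_linj hf hCAt hz hp hq h⟩, ?_⟩, ?_⟩
  · intro p q hle
    rw [hCA.1]
    exact cc_map_rigid hopen.1 hfpol ((hCAt.1 p q).mp hle)
  · intro x y hx hy hsub
    exact cc_open_aux hopen hfpol hrace hCA hCAt _ x y hx hy hsub rfl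

end Stmt9Main




section Stmt9Race

variable {EA EAt : Type u} {A : ESP EA} {At : ESP EAt} {l r : EAt → EA}

/-- The "partner" relation induced by the inverse of the symmetry. -/
def ptRel (l r : EAt → EA) (a b : EAt) : Prop := l b = r a ∧ r b = l a

lemma ptRel_symm {a b : EAt} (h : ptRel l r a b) : ptRel l r b a :=
  ⟨h.2.symm, h.1.symm⟩

lemma ptRel_unique (hmono : ∀ aa aa', l aa = l aa' → r aa = r aa' → aa = aa')
    {a b b' : EAt} (h : ptRel l r a b) (h' : ptRel l r a b') : b = b' :=
  hmono b b' (h.1.trans h'.1.symm) (h.2.trans h'.2.symm)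

lemma swap_ex (hmono : ∀ aa aa', l aa = l aa' → r aa = r aa' → aa = aa')
    (hinv : ∀ θ ∈ famOf At.toES l r, relInv θ ∈ famOf At.toES l r)
    {x : Set EAt} (hx : Config At.toES x) :
    ∃ x', Config At.toES x' ∧ (∀ a ∈ x, ∃ b ∈ x', ptRel l r a b) ∧
      (∀ b ∈ x', ∃ a ∈ x, ptRel l r a b) := by
  have hθ : {p | ∃ aa ∈ x, p = (l aa, r aa)} ∈ famOf At.toES l r := ⟨x, hx, rfl⟩
  obtain ⟨x', hx', heq⟩ := hinv _ hθ
  refine ⟨x', hx', ?_, ?_⟩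
  · intro a ha
    have hmem : ((r a, l a) : EA × EA) ∈ relInv {p | ∃ aa ∈ x, p = (l aa, r aa)} :=
      ⟨(l a, r a), ⟨a, ha, rfl⟩, rfl⟩
    rw [heq] at hmem
    obtain ⟨b, hb, hbe⟩ := hmem
    have h1 : r a = l b := congrArg Prod.fst hbe
    have h2 : l a = r b := congrArg Prod.snd hbe
    exact ⟨b, hb, h1.symm, h2.symm⟩
  · intro b hb
    have hmem : ((l b, r b) : EA × EA) ∈ relInv {p | ∃ aa ∈ x, p = (l aa, r aa)} := by
      rw [heq]
      exact ⟨b, hb, rfl⟩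
    obtain ⟨q, hq, hqe⟩ := hmem
    obtain ⟨a, ha, rfl⟩ := hq
    have h1 : l b = r a := (congrArg Prod.fst hqe).symm
    have h2 : r b = l a := (congrArg Prod.snd hqe).symm
    exact ⟨a, ha, h1, h2⟩

/-- If `l` preserves races then so does `r`, using the inverse of the symmetry. -/
lemma race_pres_r (hspan : IsSymSpanESP A At l r) (hrace : MapPresRaces At A l) :
    MapPresRaces At A r := by
  have hmono := hspan.1.2.2.1
  have hinv := hspan.1.2.2.2.2.1
  have hlpol := hspan.2.1.2
  have hrpol := hspan.2.2.2
  intro x e₁ e₂ hc1 hc2 hp1 hp2 hncfg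
  have hx : Config At.toES x := hc1.1
  have hx1 : Config At.toES (insert e₁ x) := hc1.2.2
  have hx2 : Config At.toES (insert e₂ x) := hc2.2.2
  obtain ⟨x₀', hx₀', d01, d02⟩ := swap_ex hmono hinv hx
  obtain ⟨x1', hx1', d11, d12⟩ := swap_ex hmono hinv hx1
  obtain ⟨x2', hx2', d21, d22⟩ := swap_ex hmono hinv hx2
  obtain ⟨b₁, hb₁, hptb₁⟩ := d11 e₁ (Set.mem_insert _ _)
  obtain ⟨b₂, hb₂, hptb₂⟩ := d21 e₂ (Set.mem_insert _ _)
  have hsub01 : x₀' ⊆ x1' := by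
    intro b hb
    obtain ⟨a, ha, hpt⟩ := d02 b hb
    obtain ⟨b', hb', hpt'⟩ := d11 a (Set.mem_insert_of_mem _ ha)
    rwa [ptRel_unique hmono hpt hpt']
  have hsub02 : x₀' ⊆ x2' := by
    intro b hb
    obtain ⟨a, ha, hpt⟩ := d02 b hb
    obtain ⟨b', hb', hpt'⟩ := d21 a (Set.mem_insert_of_mem _ ha)
    rwa [ptRel_unique hmono hpt hpt']
  have hx1'eq : x1' = insert b₁ x₀' := by
    refine Set.Subset.antisymm ?_ (Set.insert_subset hb₁ hsub01)
    intro b hb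
    obtain ⟨a, ha, hpt⟩ := d12 b hb
    rcases ha with rfl | ha
    · exact Or.inl (ptRel_unique hmono hpt hptb₁)
    · obtain ⟨b'', hb'', hpt''⟩ := d01 a ha
      exact Or.inr ((ptRel_unique hmono hpt hpt'') ▸ hb'')
  have hx2'eq : x2' = insert b₂ x₀' := by
    refine Set.Subset.antisymm ?_ (Set.insert_subset hb₂ hsub02)
    intro b hb
    obtain ⟨a, ha, hpt⟩ := d22 b hb
    rcases ha with rfl | ha
    · exact Or.inl (ptRel_unique hmono hpt hptb₂)
    · obtain ⟨b'', hb'', hpt''⟩ := d01 a ha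
      exact Or.inr ((ptRel_unique hmono hpt hpt'') ▸ hb'')
  have hb₁not : b₁ ∉ x₀' := by
    intro h
    obtain ⟨a, ha, hpt⟩ := d02 b₁ h
    have : e₁ = a := ptRel_unique hmono (ptRel_symm hptb₁) (ptRel_symm hpt)
    exact hc1.2.1 (this ▸ ha)
  have hb₂not : b₂ ∉ x₀' := by
    intro h
    obtain ⟨a, ha, hpt⟩ := d02 b₂ h
    have : e₂ = a := ptRel_unique hmono (ptRel_symm hptb₂) (ptRel_symm hpt)
    exact hc2.2.1 (this ▸ ha)
  have hpolb : ∀ (b e : EAt), ptRel l r e b → At.pol b = At.pol e := by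
    intro b e hpt
    rw [← hlpol b, hpt.1, hrpol e]
  have cov1 : Cov At.toES x₀' b₁ := ⟨hx₀', hb₁not, by rw [← hx1'eq]; exact hx1'⟩
  have cov2 : Cov At.toES x₀' b₂ := ⟨hx₀', hb₂not, by rw [← hx2'eq]; exact hx2'⟩
  have hncfg' : ¬ Config At.toES (insert b₁ (insert b₂ x₀')) := by
    intro hz
    obtain ⟨z', hz', dz1, dz2⟩ := swap_ex hmono hinv hz
    have hz'eq : z' = insert e₁ (insert e₂ x) := by
      refine Set.Subset.antisymm ?_ ?_
      · intro c hc
        obtain ⟨d, hd, hpt⟩ := dz2 c hc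
        rcases hd with rfl | rfl | hd
        · exact Or.inl (ptRel_unique hmono hpt (ptRel_symm hptb₁))
        · exact Or.inr (Or.inl (ptRel_unique hmono hpt (ptRel_symm hptb₂)))
        · obtain ⟨a, ha, hpt'⟩ := d02 d hd
          have : c = a := ptRel_unique hmono hpt (ptRel_symm hpt')
          exact Or.inr (Or.inr (this ▸ ha))
      · intro c hc
        rcases hc with rfl | rfl | hc
        · obtain ⟨c', hc', hptc⟩ := dz1 b₁ (Set.mem_insert _ _)
          have : c = c' :=
            ptRel_unique hmono (ptRel_symm hptb₁) hptc
          exact this ▸ hc'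
        · obtain ⟨c', hc', hptc⟩ := dz1 b₂ (Set.mem_insert_of_mem _ (Set.mem_insert _ _))
          have : c = c' := ptRel_unique hmono (ptRel_symm hptb₂) hptc
          exact this ▸ hc'
        · obtain ⟨b, hb, hpt⟩ := d01 c hc
          obtain ⟨c', hc', hptc⟩ := dz1 b
            (Set.mem_insert_of_mem _ (Set.mem_insert_of_mem _ hb))
          have : c = c' := ptRel_unique hmono (ptRel_symm hpt) hptc
          exact this ▸ hc'
    rw [hz'eq] at hz'
    exact hncfg hz'
  have hres := hrace x₀' b₁ b₂ cov1 cov2 ((hpolb b₁ e₁ hptb₁).trans hp1)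
    ((hpolb b₂ e₂ hptb₂).trans hp2) hncfg'
  have himgeq : l '' x₀' = r '' x := by
    ext c
    constructor
    · rintro ⟨b, hb, rfl⟩
      obtain ⟨a, ha, hpt⟩ := d02 b hb
      exact ⟨a, ha, hpt.1.symm⟩
    · rintro ⟨a, ha, rfl⟩
      obtain ⟨b, hb, hpt⟩ := d01 a ha
      exact ⟨b, hb, hpt.1⟩
  rwa [hptb₁.1, hptb₂.1, himgeq] at hres

end Stmt9Race

/-- for a race-preserving symmetry span on A, the copycat liftings of the
two projections are open maps. -/
theorem statement9 {EA EAt : Type u} (A : ESP EA) (At : ESP EAt) (l r : EAt → EA)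
    (hspan : IsSymSpanESP A At l r)
    (hrace : MapPresRaces At A l)
    (CA : ESP (Bool × EA)) (hCA : IsCopycatOf A CA)
    (CAt : ESP (Bool × EAt)) (hCAt : IsCopycatOf At CAt) :
    OpenMap CAt.toES CA.toES (ccMap l) ∧ OpenMap CAt.toES CA.toES (ccMap r) := by
  obtain ⟨hES, hl, hr⟩ := hspan
  constructor
  · exact cc_open_of_racepres hES.1 hl.2 hrace hCA hCAt
  · exact cc_open_of_racepres hES.2.1 hr.2 (race_pres_r ⟨hES, hl, hr⟩ hrace) hCA hCAt
end
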